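/- arXiv:1902.04182 — 10 statements merged into one kernel-verified Lean document; each statement's English description precedes it below -/
import Mathlib

section
/- Under the generalized Jordan chain hypotheses, assume additionally that Z := A − λ₀ B + (B r₁)(l₁ᵀ B) is invertible. Then for every b ∈ ℝⁿ with l₀ᵀ b = 0, the vector x := Z⁻¹ b is the unique vector in ℝⁿ satisfying both (A − λ₀ B) x = b and (l₁ᵀ B)·x = 0. -/
/-!
With `M = A - λ₀ B`, `u = B r₁`, `v = l₁ᵀ B`: since `l₀` is a left null vector of `M` with
`l₀ ⬝ᵥ u = 1`, applying `l₀` to `(M + u vᵀ) x = b` gives `v ⬝ᵥ x = l₀ ⬝ᵥ b`. So for `b ⊥ l₀` the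
equation `(M + u vᵀ) x = b` is equivalent to `M x = b` together with `v ⬝ᵥ x = 0`, and its unique
solution is `(M + u vᵀ)⁻¹ b`.
-/

open Matrix

namespace Matrix

variable {ι R : Type*} [Fintype ι] [CommRing R]

theorem add_vecMulVec_mulVec (M : Matrix ι ι R) (u v x : ι → R) :
    (M + vecMulVec u v) *ᵥ x = M *ᵥ x + (v ⬝ᵥ x) • u := by
  rw [add_mulVec, vecMulVec_mulVec, op_smul_eq_smul]

theorem vecMul_add_vecMulVec_of_vecMul_eq_zero {M : Matrix ι ι R} {u l : ι → R}
    (hl : l ᵥ* M = 0) (hlu : l ⬝ᵥ u = 1) (v : ι → R) :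
    l ᵥ* (M + vecMulVec u v) = v := by
  rw [vecMul_add, hl, vecMul_vecMulVec, hlu, zero_add, one_smul]

theorem add_vecMulVec_mulVec_eq_iff {M : Matrix ι ι R} {u l b : ι → R}
    (hl : l ᵥ* M = 0) (hlu : l ⬝ᵥ u = 1) (hb : l ⬝ᵥ b = 0) (v x : ι → R) :
    (M + vecMulVec u v) *ᵥ x = b ↔ M *ᵥ x = b ∧ v ⬝ᵥ x = 0 := by
  rw [add_vecMulVec_mulVec]
  constructor
  · intro h
    have hvx : v ⬝ᵥ x = 0 := by
      rw [← vecMul_add_vecMulVec_of_vecMul_eq_zero hl hlu v, ← dotProduct_mulVec,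
        add_vecMulVec_mulVec, h, hb]
    rw [hvx, zero_smul, add_zero] at h
    exact ⟨h, hvx⟩
  · rintro ⟨hMx, hvx⟩
    rw [hMx, hvx, zero_smul, add_zero]

variable [DecidableEq ι]

theorem mulVec_eq_iff_eq_nonsing_inv_mulVec {Z : Matrix ι ι R} (hZ : IsUnit Z) (x b : ι → R) :
    Z *ᵥ x = b ↔ x = Z⁻¹ *ᵥ b := by
  have hdet := (isUnit_iff_isUnit_det Z).mp hZ
  constructor
  · rintro rfl
    rw [mulVec_mulVec, nonsing_inv_mul Z hdet, one_mulVec]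
  · rintro rfl
    rw [mulVec_mulVec, mul_nonsing_inv Z hdet, one_mulVec]

end Matrix

theorem stmt4_general {n : ℕ} (A B : Matrix (Fin n) (Fin n) ℝ) (lam0 : ℝ)
    (r1 l0 l1 : Fin n → ℝ)
    (hl0 : l0 ᵥ* (A - lam0 • B) = 0)
    (hn01 : (l0 ᵥ* B) ⬝ᵥ r1 = 1)
    (hZ : IsUnit (A - lam0 • B + vecMulVec (B *ᵥ r1) (l1 ᵥ* B))) :
    ∀ b : Fin n → ℝ, l0 ⬝ᵥ b = 0 →
      ((A - lam0 • B) *ᵥ ((A - lam0 • B + vecMulVec (B *ᵥ r1) (l1 ᵥ* B))⁻¹ *ᵥ b) = b ∧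
        (l1 ᵥ* B) ⬝ᵥ ((A - lam0 • B + vecMulVec (B *ᵥ r1) (l1 ᵥ* B))⁻¹ *ᵥ b) = 0) ∧
      ∀ x : Fin n → ℝ, (A - lam0 • B) *ᵥ x = b → (l1 ᵥ* B) ⬝ᵥ x = 0 →
        x = (A - lam0 • B + vecMulVec (B *ᵥ r1) (l1 ᵥ* B))⁻¹ *ᵥ b := by
  intro b hb
  have hl0u : l0 ⬝ᵥ B *ᵥ r1 = 1 := by rwa [dotProduct_mulVec]
  have hsolve (x : Fin n → ℝ) :
      (A - lam0 • B) *ᵥ x = b ∧ (l1 ᵥ* B) ⬝ᵥ x = 0 ↔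
        x = (A - lam0 • B + vecMulVec (B *ᵥ r1) (l1 ᵥ* B))⁻¹ *ᵥ b := by
    rw [← add_vecMulVec_mulVec_eq_iff hl0 hl0u hb, mulVec_eq_iff_eq_nonsing_inv_mulVec hZ]
  exact ⟨(hsolve _).2 rfl, fun x hMx hvx => (hsolve x).1 ⟨hMx, hvx⟩⟩

/-- Under the generalized Jordan chain hypotheses, if
`Z := A − λ₀ B + (B r₁)(l₁ᵀ B)` is invertible, then for every `b` with `l₀ᵀ b = 0`,
the vector `x := Z⁻¹ b` is the unique vector satisfying `(A − λ₀ B) x = b` and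
`(l₁ᵀ B)·x = 0`. -/
theorem stmt4 {n : ℕ} (hn : 0 < n) (A B : Matrix (Fin n) (Fin n) ℝ) (lam0 : ℝ)
    (r0 r1 l0 l1 : Fin n → ℝ)
    (hr0 : A *ᵥ r0 = lam0 • (B *ᵥ r0))
    (hr1 : A *ᵥ r1 = lam0 • (B *ᵥ r1) + B *ᵥ r0)
    (hl0 : l0 ᵥ* (A - lam0 • B) = 0)
    (hl1 : l1 ᵥ* (A - lam0 • B) = l0 ᵥ* B)
    (hn00 : (l0 ᵥ* B) ⬝ᵥ r0 = 0)
    (hn01 : (l0 ᵥ* B) ⬝ᵥ r1 = 1)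
    (hn10 : (l1 ᵥ* B) ⬝ᵥ r0 = 1)
    (hn11 : (l1 ᵥ* B) ⬝ᵥ r1 = 0)
    (hZ : IsUnit (A - lam0 • B + vecMulVec (B *ᵥ r1) (l1 ᵥ* B))) :
    ∀ b : Fin n → ℝ, l0 ⬝ᵥ b = 0 →
      ((A - lam0 • B) *ᵥ ((A - lam0 • B + vecMulVec (B *ᵥ r1) (l1 ᵥ* B))⁻¹ *ᵥ b) = b ∧
        (l1 ᵥ* B) ⬝ᵥ ((A - lam0 • B + vecMulVec (B *ᵥ r1) (l1 ᵥ* B))⁻¹ *ᵥ b) = 0) ∧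
      ∀ x : Fin n → ℝ, (A - lam0 • B) *ᵥ x = b → (l1 ᵥ* B) ⬝ᵥ x = 0 →
        x = (A - lam0 • B + vecMulVec (B *ᵥ r1) (l1 ᵥ* B))⁻¹ *ᵥ b :=
  stmt4_general A B lam0 r1 l0 l1 hl0 hn01 hZ
end

section
/- Under the generalized Jordan chain hypotheses and the versal deformation hypotheses, the derivative of p at t = 0 is given by p′(0) = l₀ᵀ A′(0) r₀ − λ₀ l₀ᵀ B′(0) r₀. -/
open Matrix Filter Topology

section Derivative

variable {𝕜 : Type*} [NontriviallyNormedField 𝕜] {m k : Type*} [Fintype m] [Fintype k]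

theorem HasDerivAt.dotProduct_mulVec (u : m → 𝕜) {M : 𝕜 → Matrix m k 𝕜} {v : 𝕜 → k → 𝕜}
    {M' : Matrix m k 𝕜} {v' : k → 𝕜} {x : 𝕜}
    (hM : ∀ i j, HasDerivAt (fun t => M t i j) (M' i j) x) (hv : HasDerivAt v v' x) :
    HasDerivAt (fun t => u ⬝ᵥ (M t *ᵥ v t)) (u ⬝ᵥ (M' *ᵥ v x) + u ⬝ᵥ (M x *ᵥ v')) x := by
  have hvj : ∀ j, HasDerivAt (fun t => v t j) (v' j) x := hasDerivAt_pi.mp hv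
  have h : HasDerivAt (fun t => ∑ i, u i * ∑ j, M t i j * v t j)
      (∑ i, u i * ∑ j, (M' i j * v x j + M x i j * v' j)) x :=
    HasDerivAt.fun_sum fun i _ =>
      (HasDerivAt.fun_sum fun j _ => (hM i j).mul (hvj j)).const_mul (u i)
  convert h using 1
  all_goals simp only [dotProduct, mulVec, mul_add, Finset.mul_sum, Finset.sum_add_distrib]

end Derivative

theorem dotProduct_mulVec_eq_mul_of_vecMul_sub_smul_eq_zero {R m : Type*} [CommRing R]
    [Fintype m] {l : m → R} {A B : Matrix m m R} {c : R} (h : l ᵥ* (A - c • B) = 0)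
    (w : m → R) : l ⬝ᵥ (A *ᵥ w) = c * (l ⬝ᵥ (B *ᵥ w)) := by
  rw [vecMul_sub, vecMul_smul, sub_eq_zero] at h
  rw [dotProduct_mulVec, dotProduct_mulVec, h, smul_dotProduct, smul_eq_mul]

theorem stmt5_general {n : ℕ}
    (A0 B0 : Matrix (Fin n) (Fin n) ℝ) (lam0 : ℝ)
    (r0 r1 l0 : Fin n → ℝ)
    (hl0 : l0 ᵥ* (A0 - lam0 • B0) = 0)
    (hn00 : (l0 ᵥ* B0) ⬝ᵥ r0 = 0)
    (hn01 : (l0 ᵥ* B0) ⬝ᵥ r1 = 1)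
    -- versal deformation hypotheses
    (A B : ℝ → Matrix (Fin n) (Fin n) ℝ)
    (R0 R1 : ℝ → Fin n → ℝ) (s p : ℝ → ℝ)
    (A' B' : Matrix (Fin n) (Fin n) ℝ) (R0' R1' : Fin n → ℝ) (s' p' : ℝ)
    (hA : ∀ i j, HasDerivAt (fun t => A t i j) (A' i j) 0)
    (hB : ∀ i j, HasDerivAt (fun t => B t i j) (B' i j) 0)
    (hR0 : HasDerivAt R0 R0' 0) (hR1 : HasDerivAt R1 R1' 0)
    (hs : HasDerivAt s s' 0) (hp : HasDerivAt p p' 0)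
    (heq0 : ∀ᶠ t in nhds 0,
      A t *ᵥ R0 t = (lam0 + s t) • (B t *ᵥ R0 t) + p t • (B t *ᵥ R1 t))
    (hA0 : A 0 = A0) (hB0 : B 0 = B0)
    (hs0 : s 0 = 0) (hp0 : p 0 = 0)
    (hR00 : R0 0 = r0) (hR10 : R1 0 = r1) :
    p' = (l0 ᵥ* A') ⬝ᵥ r0 - lam0 * ((l0 ᵥ* B') ⬝ᵥ r0) := by
  -- Pair the first deformation equation with the left eigenvector `l₀` and differentiate at 0:
  -- `l₀ᵀ A₀ R₀'` cancels against `λ₀ l₀ᵀ B₀ R₀'`, and the normalizations kill the `s'` term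
  -- and leave `p'` with coefficient 1.
  have hpaired : (fun t => l0 ⬝ᵥ (A t *ᵥ R0 t)) =ᶠ[𝓝 0] fun t =>
      (lam0 + s t) * (l0 ⬝ᵥ (B t *ᵥ R0 t)) + p t * (l0 ⬝ᵥ (B t *ᵥ R1 t)) := by
    filter_upwards [heq0] with t ht
    rw [ht, dotProduct_add, dotProduct_smul, dotProduct_smul, smul_eq_mul, smul_eq_mul]
  have hderiv := (HasDerivAt.dotProduct_mulVec l0 hA hR0).unique
    ((((hs.const_add lam0).mul (.dotProduct_mulVec l0 hB hR0)).add
      (hp.mul (.dotProduct_mulVec l0 hB hR1))).congr_of_eventuallyEq hpaired)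
  have hR0' := dotProduct_mulVec_eq_mul_of_vecMul_sub_smul_eq_zero hl0 R0'
  rw [← dotProduct_mulVec] at hn00 hn01
  rw [hA0, hB0, hR00, hR10, hs0, hp0, hR0', hn00, hn01] at hderiv
  rw [← dotProduct_mulVec, ← dotProduct_mulVec]
  linarith

/-- Under the generalized Jordan chain hypotheses and the versal deformation
hypotheses, the derivative of `p` at `t = 0` is
`p′(0) = l₀ᵀ A′(0) r₀ − λ₀ l₀ᵀ B′(0) r₀`. -/
theorem stmt5 {n : ℕ} (hn : 0 < n)
    (A0 B0 : Matrix (Fin n) (Fin n) ℝ) (lam0 : ℝ)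
    (r0 r1 l0 l1 : Fin n → ℝ)
    (hr0 : A0 *ᵥ r0 = lam0 • (B0 *ᵥ r0))
    (hr1 : A0 *ᵥ r1 = lam0 • (B0 *ᵥ r1) + B0 *ᵥ r0)
    (hl0 : l0 ᵥ* (A0 - lam0 • B0) = 0)
    (hl1 : l1 ᵥ* (A0 - lam0 • B0) = l0 ᵥ* B0)
    (hn00 : (l0 ᵥ* B0) ⬝ᵥ r0 = 0)
    (hn01 : (l0 ᵥ* B0) ⬝ᵥ r1 = 1)
    (hn10 : (l1 ᵥ* B0) ⬝ᵥ r0 = 1)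
    (hn11 : (l1 ᵥ* B0) ⬝ᵥ r1 = 0)
    -- versal deformation hypotheses
    (A B : ℝ → Matrix (Fin n) (Fin n) ℝ)
    (R0 R1 : ℝ → Fin n → ℝ) (s p : ℝ → ℝ)
    (A' B' : Matrix (Fin n) (Fin n) ℝ) (R0' R1' : Fin n → ℝ) (s' p' : ℝ)
    (hA : ∀ i j, HasDerivAt (fun t => A t i j) (A' i j) 0)
    (hB : ∀ i j, HasDerivAt (fun t => B t i j) (B' i j) 0)
    (hR0 : HasDerivAt R0 R0' 0) (hR1 : HasDerivAt R1 R1' 0)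
    (hs : HasDerivAt s s' 0) (hp : HasDerivAt p p' 0)
    (heq0 : ∀ᶠ t in nhds 0,
      A t *ᵥ R0 t = (lam0 + s t) • (B t *ᵥ R0 t) + p t • (B t *ᵥ R1 t))
    (heq1 : ∀ᶠ t in nhds 0,
      A t *ᵥ R1 t = (lam0 + s t) • (B t *ᵥ R1 t) + B t *ᵥ R0 t)
    (hA0 : A 0 = A0) (hB0 : B 0 = B0)
    (hs0 : s 0 = 0) (hp0 : p 0 = 0)
    (hR00 : R0 0 = r0) (hR10 : R1 0 = r1) :
    p' = (l0 ᵥ* A') ⬝ᵥ r0 - lam0 * ((l0 ᵥ* B') ⬝ᵥ r0) :=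
  stmt5_general A0 B0 lam0 r0 r1 l0 hl0 hn00 hn01 A B R0 R1 s p A' B' R0' R1' s' p' hA hB hR0 hR1 hs
    hp heq0 hA0 hB0 hs0 hp0 hR00 hR10
end

section
/- Under the generalized Jordan chain hypotheses and the versal deformation hypotheses, assume Z := A₀ − λ₀ B₀ + (B₀ r₁)(l₁ᵀ B₀) is invertible. Then the vector x₀ := s′(0) r₁ + p′(0) r₀ + Z⁻¹(λ₀ B′(0) r₀ − A′(0) r₀) satisfies the linearized deformation equation (A₀ − λ₀ B₀) x₀ = s′(0) B₀ r₀ + p′(0) B₀ r₁ + λ₀ B′(0) r₀ − A′(0) r₀. -/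
/-!
Differentiating `A(t) R₀(t) = (λ₀ + s(t)) B(t) R₀(t) + p(t) B(t) R₁(t)` at `t = 0` shows that
`R₀'(0)` solves `(A₀ - λ₀ B₀) y = s' B₀ r₀ + p' B₀ r₁ + v` with `v := λ₀ B' r₀ - A' r₀`; pairing with
the left null vector `l₀` gives `p' = -⟨l₀, v⟩`. Since `l₀ᵀ Z = l₁ᵀ B₀`, the rank-one correction in
`Z` is invisible after `l₀`, and `(A₀ - λ₀ B₀) Z⁻¹ v = v - ⟨l₀, v⟩ B₀ r₁ = v + p' B₀ r₁`. Together
with `(A₀ - λ₀ B₀) r₀ = 0` and `(A₀ - λ₀ B₀) r₁ = B₀ r₀` this is the claimed identity.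
-/

open Matrix

theorem HasDerivAt.mulVec {𝕜 : Type*} [NontriviallyNormedField 𝕜] {m n : Type*} [Fintype m]
    [Fintype n] {A : 𝕜 → Matrix m n 𝕜} {A' : Matrix m n 𝕜} {x : 𝕜 → n → 𝕜} {x' : n → 𝕜} {t : 𝕜}
    (hA : ∀ i j, HasDerivAt (fun t => A t i j) (A' i j) t) (hx : HasDerivAt x x' t) :
    HasDerivAt (fun t => A t *ᵥ x t) (A' *ᵥ x t + A t *ᵥ x') t := by
  refine hasDerivAt_pi.2 fun i => ?_
  show HasDerivAt (fun t => ∑ j, A t i j * x t j) (∑ j, A' i j * x t j + ∑ j, A t i j * x' j) t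
  simpa only [Finset.sum_add_distrib] using
    HasDerivAt.fun_sum (u := Finset.univ) fun j _ => (hA i j).fun_mul (hasDerivAt_pi.1 hx j)

theorem Matrix.mulVec_nonsing_inv_add_vecMulVec_mulVec {R n : Type*} [CommRing R] [Fintype n]
    [DecidableEq n] {M : Matrix n n R} {u w l : n → R} (hZ : IsUnit (M + vecMulVec u w))
    (hlM : l ᵥ* M = 0) (hlu : l ⬝ᵥ u = 1) (v : n → R) :
    M *ᵥ ((M + vecMulVec u w)⁻¹ *ᵥ v) = v - (l ⬝ᵥ v) • u := by
  set Z := M + vecMulVec u w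
  have hZZ : Z * Z⁻¹ = 1 := mul_nonsing_inv Z ((isUnit_iff_isUnit_det Z).mp hZ)
  have hlZ : l ᵥ* Z = w := by
    rw [vecMul_add, hlM, vecMul_vecMulVec, hlu, one_smul, zero_add]
  have hwZ : w ᵥ* Z⁻¹ = l := by
    rw [← hlZ, vecMul_vecMul, hZZ, vecMul_one]
  have hM : M = Z - vecMulVec u w := by simp [Z]
  rw [hM, sub_mulVec, mulVec_mulVec, hZZ, one_mulVec, vecMulVec_mulVec, dotProduct_mulVec, hwZ,
    op_smul_eq_smul]

theorem mulVec_deriv_eq_of_versal_deformation {𝕜 : Type*} [NontriviallyNormedField 𝕜]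
    {n : Type*} [Fintype n]
    {A B : 𝕜 → Matrix n n 𝕜} {A' B' : Matrix n n 𝕜} {R0 R1 : 𝕜 → n → 𝕜} {R0' R1' : n → 𝕜}
    {s p : 𝕜 → 𝕜} {s' p' lam0 : 𝕜}
    (hA : ∀ i j, HasDerivAt (fun t => A t i j) (A' i j) 0)
    (hB : ∀ i j, HasDerivAt (fun t => B t i j) (B' i j) 0)
    (hR0 : HasDerivAt R0 R0' 0) (hR1 : HasDerivAt R1 R1' 0)
    (hs : HasDerivAt s s' 0) (hp : HasDerivAt p p' 0)
    (heq0 : ∀ᶠ t in nhds 0,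
      A t *ᵥ R0 t = (lam0 + s t) • (B t *ᵥ R0 t) + p t • (B t *ᵥ R1 t))
    (hs0 : s 0 = 0) (hp0 : p 0 = 0) :
    (A 0 - lam0 • B 0) *ᵥ R0' =
      s' • (B 0 *ᵥ R0 0) + p' • (B 0 *ᵥ R1 0) + (lam0 • (B' *ᵥ R0 0) - A' *ᵥ R0 0) := by
  have hrhs := ((hs.const_add lam0).smul (HasDerivAt.mulVec hB hR0)).add
    (hp.smul (HasDerivAt.mulVec hB hR1))
  have h := (HasDerivAt.mulVec hA hR0).unique (hrhs.congr_of_eventuallyEq heq0)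
  rw [hs0, hp0, add_zero, zero_smul, zero_add] at h
  rw [sub_mulVec, smul_mulVec]
  linear_combination (norm := module) h

theorem stmt7_general {n : ℕ}
    (A0 B0 : Matrix (Fin n) (Fin n) ℝ) (lam0 : ℝ)
    (r0 r1 l0 l1 : Fin n → ℝ)
    (hr0 : A0 *ᵥ r0 = lam0 • (B0 *ᵥ r0))
    (hr1 : A0 *ᵥ r1 = lam0 • (B0 *ᵥ r1) + B0 *ᵥ r0)
    (hl0 : l0 ᵥ* (A0 - lam0 • B0) = 0)
    (hn00 : (l0 ᵥ* B0) ⬝ᵥ r0 = 0)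
    (hn01 : (l0 ᵥ* B0) ⬝ᵥ r1 = 1)
    -- versal deformation hypotheses
    (A B : ℝ → Matrix (Fin n) (Fin n) ℝ)
    (R0 R1 : ℝ → Fin n → ℝ) (s p : ℝ → ℝ)
    (A' B' : Matrix (Fin n) (Fin n) ℝ) (R0' R1' : Fin n → ℝ) (s' p' : ℝ)
    (hA : ∀ i j, HasDerivAt (fun t => A t i j) (A' i j) 0)
    (hB : ∀ i j, HasDerivAt (fun t => B t i j) (B' i j) 0)
    (hR0 : HasDerivAt R0 R0' 0) (hR1 : HasDerivAt R1 R1' 0)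
    (hs : HasDerivAt s s' 0) (hp : HasDerivAt p p' 0)
    (heq0 : ∀ᶠ t in nhds 0,
      A t *ᵥ R0 t = (lam0 + s t) • (B t *ᵥ R0 t) + p t • (B t *ᵥ R1 t))
    (hA0 : A 0 = A0) (hB0 : B 0 = B0)
    (hs0 : s 0 = 0) (hp0 : p 0 = 0)
    (hR00 : R0 0 = r0) (hR10 : R1 0 = r1)
    (hZ : IsUnit (A0 - lam0 • B0 + vecMulVec (B0 *ᵥ r1) (l1 ᵥ* B0))) :
    (A0 - lam0 • B0) *ᵥ
        (s' • r1 + p' • r0 +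
          (A0 - lam0 • B0 + vecMulVec (B0 *ᵥ r1) (l1 ᵥ* B0))⁻¹ *ᵥ
            (lam0 • (B' *ᵥ r0) - A' *ᵥ r0)) =
      s' • (B0 *ᵥ r0) + p' • (B0 *ᵥ r1) + lam0 • (B' *ᵥ r0) - A' *ᵥ r0 := by
  set v := lam0 • (B' *ᵥ r0) - A' *ᵥ r0
  have hlin := mulVec_deriv_eq_of_versal_deformation hA hB hR0 hR1 hs hp heq0 hs0 hp0
  rw [hA0, hB0, hR00, hR10] at hlin
  have hp' : p' = -(l0 ⬝ᵥ v) := by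
    have h := congrArg (l0 ⬝ᵥ ·) hlin
    simp only [dotProduct_mulVec, hl0, zero_dotProduct, dotProduct_add, dotProduct_smul, hn00,
      hn01, smul_eq_mul] at h
    linarith
  have hZv := mulVec_nonsing_inv_add_vecMulVec_mulVec hZ hl0 (by rwa [dotProduct_mulVec]) v
  have hMr0 : (A0 - lam0 • B0) *ᵥ r0 = 0 := by rw [sub_mulVec, smul_mulVec, hr0, sub_self]
  have hMr1 : (A0 - lam0 • B0) *ᵥ r1 = B0 *ᵥ r0 := by
    rw [sub_mulVec, smul_mulVec, hr1, add_sub_cancel_left]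
  rw [mulVec_add, mulVec_add, mulVec_smul, mulVec_smul, hMr0, hMr1, hZv, hp']
  module

/-- Under the generalized Jordan chain hypotheses and the versal deformation
hypotheses, if `Z := A₀ − λ₀ B₀ + (B₀ r₁)(l₁ᵀ B₀)` is invertible, then
`x₀ := s′(0) r₁ + p′(0) r₀ + Z⁻¹(λ₀ B′(0) r₀ − A′(0) r₀)` satisfies
`(A₀ − λ₀ B₀) x₀ = s′(0) B₀ r₀ + p′(0) B₀ r₁ + λ₀ B′(0) r₀ − A′(0) r₀`. -/
theorem stmt7 {n : ℕ} (hn : 0 < n)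
    (A0 B0 : Matrix (Fin n) (Fin n) ℝ) (lam0 : ℝ)
    (r0 r1 l0 l1 : Fin n → ℝ)
    (hr0 : A0 *ᵥ r0 = lam0 • (B0 *ᵥ r0))
    (hr1 : A0 *ᵥ r1 = lam0 • (B0 *ᵥ r1) + B0 *ᵥ r0)
    (hl0 : l0 ᵥ* (A0 - lam0 • B0) = 0)
    (hl1 : l1 ᵥ* (A0 - lam0 • B0) = l0 ᵥ* B0)
    (hn00 : (l0 ᵥ* B0) ⬝ᵥ r0 = 0)
    (hn01 : (l0 ᵥ* B0) ⬝ᵥ r1 = 1)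
    (hn10 : (l1 ᵥ* B0) ⬝ᵥ r0 = 1)
    (hn11 : (l1 ᵥ* B0) ⬝ᵥ r1 = 0)
    -- versal deformation hypotheses
    (A B : ℝ → Matrix (Fin n) (Fin n) ℝ)
    (R0 R1 : ℝ → Fin n → ℝ) (s p : ℝ → ℝ)
    (A' B' : Matrix (Fin n) (Fin n) ℝ) (R0' R1' : Fin n → ℝ) (s' p' : ℝ)
    (hA : ∀ i j, HasDerivAt (fun t => A t i j) (A' i j) 0)
    (hB : ∀ i j, HasDerivAt (fun t => B t i j) (B' i j) 0)
    (hR0 : HasDerivAt R0 R0' 0) (hR1 : HasDerivAt R1 R1' 0)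
    (hs : HasDerivAt s s' 0) (hp : HasDerivAt p p' 0)
    (heq0 : ∀ᶠ t in nhds 0,
      A t *ᵥ R0 t = (lam0 + s t) • (B t *ᵥ R0 t) + p t • (B t *ᵥ R1 t))
    (heq1 : ∀ᶠ t in nhds 0,
      A t *ᵥ R1 t = (lam0 + s t) • (B t *ᵥ R1 t) + B t *ᵥ R0 t)
    (hA0 : A 0 = A0) (hB0 : B 0 = B0)
    (hs0 : s 0 = 0) (hp0 : p 0 = 0)
    (hR00 : R0 0 = r0) (hR10 : R1 0 = r1)
    (hZ : IsUnit (A0 - lam0 • B0 + vecMulVec (B0 *ᵥ r1) (l1 ᵥ* B0))) :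
    (A0 - lam0 • B0) *ᵥ
        (s' • r1 + p' • r0 +
          (A0 - lam0 • B0 + vecMulVec (B0 *ᵥ r1) (l1 ᵥ* B0))⁻¹ *ᵥ
            (lam0 • (B' *ᵥ r0) - A' *ᵥ r0)) =
      s' • (B0 *ᵥ r0) + p' • (B0 *ᵥ r1) + lam0 • (B' *ᵥ r0) - A' *ᵥ r0 :=
  stmt7_general A0 B0 lam0 r0 r1 l0 l1 hr0 hr1 hl0 hn00 hn01 A B R0 R1 s p A' B' R0' R1' s' p' hA hB
    hR0 hR1 hs hp heq0 hA0 hB0 hs0 hp0 hR00 hR10 hZ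
end

section
/- Under the generalized Jordan chain hypotheses and the versal deformation hypotheses, assume Z := A₀ − λ₀ B₀ + (B₀ r₁)(l₁ᵀ B₀) is invertible, and set x₀ := s′(0) r₁ + p′(0) r₀ + Z⁻¹(λ₀ B′(0) r₀ − A′(0) r₀). Then the vector x₁ := s′(0) r₀ + Z⁻¹(B′(0) r₀ + B₀ x₀ − A′(0) r₁ + λ₀ B′(0) r₁) satisfies the linearized deformation equation (A₀ − λ₀ B₀) x₁ = B′(0) r₀ + B₀ x₀ + s′(0) B₀ r₁ − A′(0) r₁ + λ₀ B′(0) r₁. -/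
open Matrix

/-!
Differentiating the two deformed chain equations at `t = 0` gives
`M R₀' = s' B₀ r₀ + p' B₀ r₁ + (λ₀ B' r₀ - A' r₀)` and
`M R₁' = s' B₀ r₁ + (B' r₀ - A' r₁ + λ₀ B' r₁) + B₀ R₀'`, where `M = A₀ - λ₀ B₀`.
Since `l₀ᵀ Z = l₁ᵀ B₀`, the matrix `Z` inverts `M` up to a rank-one error:
`M Z⁻¹ u = u - (l₀ · u) B₀ r₁`. Hence `x₁` solves the required equation as soon as
`l₀ · (B' r₀ + B₀ x₀ - A' r₁ + λ₀ B' r₁) = -s'`. Pairing the second derivative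
equation with `l₀` gives this identity with `R₀'` in place of `x₀`, and the difference
`(l₀ᵀ B₀) · (x₀ - R₀')` vanishes because `l₁ᵀ Z = l₀ᵀ B₀` and the first derivative
equation paired with `l₁` compute both terms as `s' + l₁ · (λ₀ B' r₀ - A' r₀)`.
-/

theorem hasDerivAt_mulVec {m n : Type*} [Fintype m] [Fintype n]
    {A : ℝ → Matrix m n ℝ} {A' : Matrix m n ℝ} {R : ℝ → n → ℝ} {R' : n → ℝ} {x : ℝ}
    (hA : ∀ i j, HasDerivAt (fun t => A t i j) (A' i j) x) (hR : HasDerivAt R R' x) :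
    HasDerivAt (fun t => A t *ᵥ R t) (A' *ᵥ R x + A x *ᵥ R') x := by
  refine hasDerivAt_pi.2 fun i => ?_
  simp only [Pi.add_apply, mulVec, dotProduct, ← Finset.sum_add_distrib]
  exact HasDerivAt.fun_sum fun j _ => (hA i j).mul (hasDerivAt_pi.1 hR j)

section FirstOrder

variable {n : Type*} [Fintype n] {A B : ℝ → Matrix n n ℝ} {A' B' : Matrix n n ℝ}
  {R0 R1 : ℝ → n → ℝ} {R0' R1' : n → ℝ} {s p : ℝ → ℝ} {s' p' lam0 x : ℝ}

theorem mulVec_deriv_of_eventually_eigen_eq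
    (hA : ∀ i j, HasDerivAt (fun t => A t i j) (A' i j) x)
    (hB : ∀ i j, HasDerivAt (fun t => B t i j) (B' i j) x)
    (hR0 : HasDerivAt R0 R0' x) (hR1 : HasDerivAt R1 R1' x)
    (hs : HasDerivAt s s' x) (hp : HasDerivAt p p' x)
    (heq : ∀ᶠ t in nhds x,
      A t *ᵥ R0 t = (lam0 + s t) • (B t *ᵥ R0 t) + p t • (B t *ᵥ R1 t))
    (hs0 : s x = 0) (hp0 : p x = 0) :
    (A x - lam0 • B x) *ᵥ R0' =
      s' • (B x *ᵥ R0 x) + p' • (B x *ᵥ R1 x) + (lam0 • (B' *ᵥ R0 x) - A' *ᵥ R0 x) := by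
  have hrhs := ((hs.const_add lam0).smul (hasDerivAt_mulVec hB hR0)).add
    (hp.smul (hasDerivAt_mulVec hB hR1))
  have h := (hasDerivAt_mulVec hA hR0).unique (hrhs.congr_of_eventuallyEq heq)
  rw [hs0, hp0, add_zero] at h
  rw [sub_mulVec, smul_mulVec]
  linear_combination (norm := module) h

theorem mulVec_deriv_of_eventually_chain_eq
    (hA : ∀ i j, HasDerivAt (fun t => A t i j) (A' i j) x)
    (hB : ∀ i j, HasDerivAt (fun t => B t i j) (B' i j) x)
    (hR0 : HasDerivAt R0 R0' x) (hR1 : HasDerivAt R1 R1' x) (hs : HasDerivAt s s' x)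
    (heq : ∀ᶠ t in nhds x, A t *ᵥ R1 t = (lam0 + s t) • (B t *ᵥ R1 t) + B t *ᵥ R0 t)
    (hs0 : s x = 0) :
    (A x - lam0 • B x) *ᵥ R1' =
      s' • (B x *ᵥ R1 x) +
        ((B' *ᵥ R0 x - A' *ᵥ R1 x + lam0 • (B' *ᵥ R1 x)) + B x *ᵥ R0') := by
  have hrhs := ((hs.const_add lam0).smul (hasDerivAt_mulVec hB hR1)).add
    (hasDerivAt_mulVec hB hR0)
  have h := (hasDerivAt_mulVec hA hR1).unique (hrhs.congr_of_eventuallyEq heq)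
  rw [hs0, add_zero] at h
  rw [sub_mulVec, smul_mulVec]
  linear_combination (norm := module) h

end FirstOrder

section BorderedInverse

variable {n K : Type*} [Fintype n] [DecidableEq n] [CommRing K]

theorem dotProduct_inv_mulVec_of_vecMul_eq {Z : Matrix n n K} (hZ : IsUnit Z)
    {l m : n → K} (h : l ᵥ* Z = m) (u : n → K) : m ⬝ᵥ (Z⁻¹ *ᵥ u) = l ⬝ᵥ u := by
  rw [← h, ← dotProduct_mulVec, mulVec_mulVec,
    mul_nonsing_inv Z ((isUnit_iff_isUnit_det Z).1 hZ), one_mulVec]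

theorem mulVec_inv_add_vecMulVec_mulVec {M : Matrix n n K} {a b : n → K}
    (hZ : IsUnit (M + vecMulVec a b)) (u : n → K) :
    M *ᵥ ((M + vecMulVec a b)⁻¹ *ᵥ u) = u - (b ⬝ᵥ ((M + vecMulVec a b)⁻¹ *ᵥ u)) • a := by
  set Z := M + vecMulVec a b
  rw [show M = Z - vecMulVec a b from (add_sub_cancel_right M _).symm, sub_mulVec,
    mulVec_mulVec, mul_nonsing_inv Z ((isUnit_iff_isUnit_det Z).1 hZ), one_mulVec,
    vecMulVec_mulVec, op_smul_eq_smul]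

theorem mulVec_bordered_inverse_solution {M B0 : Matrix n n K} {r0 r1 l0 l1 : n → K}
    (hl0 : l0 ᵥ* M = 0) (hl1 : l1 ᵥ* M = l0 ᵥ* B0)
    (hn00 : (l0 ᵥ* B0) ⬝ᵥ r0 = 0) (hn01 : (l0 ᵥ* B0) ⬝ᵥ r1 = 1)
    (hn10 : (l1 ᵥ* B0) ⬝ᵥ r0 = 1) (hn11 : (l1 ᵥ* B0) ⬝ᵥ r1 = 0)
    (hr0 : M *ᵥ r0 = 0) (hZ : IsUnit (M + vecMulVec (B0 *ᵥ r1) (l1 ᵥ* B0)))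
    {R0' R1' v c : n → K} {s' p' : K}
    (hR0' : M *ᵥ R0' = s' • (B0 *ᵥ r0) + p' • (B0 *ᵥ r1) + v)
    (hR1' : M *ᵥ R1' = s' • (B0 *ᵥ r1) + (c + B0 *ᵥ R0')) :
    M *ᵥ (s' • r0 + (M + vecMulVec (B0 *ᵥ r1) (l1 ᵥ* B0))⁻¹ *ᵥ
        (c + B0 *ᵥ (s' • r1 + p' • r0 + (M + vecMulVec (B0 *ᵥ r1) (l1 ᵥ* B0))⁻¹ *ᵥ v))) =
      c + B0 *ᵥ (s' • r1 + p' • r0 + (M + vecMulVec (B0 *ᵥ r1) (l1 ᵥ* B0))⁻¹ *ᵥ v) +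
        s' • (B0 *ᵥ r1) := by
  set Z := M + vecMulVec (B0 *ᵥ r1) (l1 ᵥ* B0)
  set x0 := s' • r1 + p' • r0 + Z⁻¹ *ᵥ v
  have hl0Z : l0 ᵥ* Z = l1 ᵥ* B0 := by
    rw [vecMul_add, hl0, vecMul_vecMulVec, dotProduct_mulVec, hn01, one_smul, zero_add]
  have hl1Z : l1 ᵥ* Z = l0 ᵥ* B0 := by
    rw [vecMul_add, hl1, vecMul_vecMulVec, dotProduct_mulVec, hn11, zero_smul, add_zero]
  have hR0'_pair : (l0 ᵥ* B0) ⬝ᵥ R0' = s' + l1 ⬝ᵥ v := by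
    have h := congrArg (l1 ⬝ᵥ ·) hR0'
    simp only [dotProduct_mulVec, hl1, dotProduct_add, dotProduct_smul, hn10, hn11,
      smul_eq_mul] at h
    linear_combination h
  have hx0_pair : (l0 ᵥ* B0) ⬝ᵥ x0 = s' + l1 ⬝ᵥ v := by
    simp only [x0, dotProduct_add, dotProduct_smul, hn01, hn00,
      dotProduct_inv_mulVec_of_vecMul_eq hZ hl1Z, smul_eq_mul]
    ring
  have hsolvable : l0 ⬝ᵥ (c + B0 *ᵥ R0') = -s' := by
    have h := congrArg (l0 ⬝ᵥ ·) hR1'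
    simp only [dotProduct_mulVec l0 M, hl0, zero_dotProduct, dotProduct_add, dotProduct_smul,
      dotProduct_mulVec l0 B0 r1, hn01, smul_eq_mul] at h
    rw [dotProduct_add]
    linear_combination -h
  have hw : l0 ⬝ᵥ (c + B0 *ᵥ x0) = -s' := by
    rw [dotProduct_add, dotProduct_mulVec, hx0_pair, ← hR0'_pair, ← dotProduct_mulVec,
      ← dotProduct_add, hsolvable]
  rw [mulVec_add, mulVec_smul, hr0, smul_zero, zero_add, mulVec_inv_add_vecMulVec_mulVec hZ,
    dotProduct_inv_mulVec_of_vecMul_eq hZ hl0Z, hw, neg_smul, sub_neg_eq_add]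

end BorderedInverse

theorem stmt8_general {n : ℕ}
    (A0 B0 : Matrix (Fin n) (Fin n) ℝ) (lam0 : ℝ)
    (r0 r1 l0 l1 : Fin n → ℝ)
    (hr0 : A0 *ᵥ r0 = lam0 • (B0 *ᵥ r0))
    (hl0 : l0 ᵥ* (A0 - lam0 • B0) = 0)
    (hl1 : l1 ᵥ* (A0 - lam0 • B0) = l0 ᵥ* B0)
    (hn00 : (l0 ᵥ* B0) ⬝ᵥ r0 = 0)
    (hn01 : (l0 ᵥ* B0) ⬝ᵥ r1 = 1)
    (hn10 : (l1 ᵥ* B0) ⬝ᵥ r0 = 1)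
    (hn11 : (l1 ᵥ* B0) ⬝ᵥ r1 = 0)
    -- versal deformation hypotheses
    (A B : ℝ → Matrix (Fin n) (Fin n) ℝ)
    (R0 R1 : ℝ → Fin n → ℝ) (s p : ℝ → ℝ)
    (A' B' : Matrix (Fin n) (Fin n) ℝ) (R0' R1' : Fin n → ℝ) (s' p' : ℝ)
    (hA : ∀ i j, HasDerivAt (fun t => A t i j) (A' i j) 0)
    (hB : ∀ i j, HasDerivAt (fun t => B t i j) (B' i j) 0)
    (hR0 : HasDerivAt R0 R0' 0) (hR1 : HasDerivAt R1 R1' 0)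
    (hs : HasDerivAt s s' 0) (hp : HasDerivAt p p' 0)
    (heq0 : ∀ᶠ t in nhds 0,
      A t *ᵥ R0 t = (lam0 + s t) • (B t *ᵥ R0 t) + p t • (B t *ᵥ R1 t))
    (heq1 : ∀ᶠ t in nhds 0,
      A t *ᵥ R1 t = (lam0 + s t) • (B t *ᵥ R1 t) + B t *ᵥ R0 t)
    (hA0 : A 0 = A0) (hB0 : B 0 = B0)
    (hs0 : s 0 = 0) (hp0 : p 0 = 0)
    (hR00 : R0 0 = r0) (hR10 : R1 0 = r1)
    (hZ : IsUnit (A0 - lam0 • B0 + vecMulVec (B0 *ᵥ r1) (l1 ᵥ* B0))) :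
    (A0 - lam0 • B0) *ᵥ
        (s' • r0 +
          (A0 - lam0 • B0 + vecMulVec (B0 *ᵥ r1) (l1 ᵥ* B0))⁻¹ *ᵥ
            (B' *ᵥ r0 +
              B0 *ᵥ (s' • r1 + p' • r0 +
          (A0 - lam0 • B0 + vecMulVec (B0 *ᵥ r1) (l1 ᵥ* B0))⁻¹ *ᵥ
            (lam0 • (B' *ᵥ r0) - A' *ᵥ r0)) -
              A' *ᵥ r1 + lam0 • (B' *ᵥ r1))) =
      B' *ᵥ r0 +
        B0 *ᵥ (s' • r1 + p' • r0 +
          (A0 - lam0 • B0 + vecMulVec (B0 *ᵥ r1) (l1 ᵥ* B0))⁻¹ *ᵥ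
            (lam0 • (B' *ᵥ r0) - A' *ᵥ r0)) +
        s' • (B0 *ᵥ r1) - A' *ᵥ r1 + lam0 • (B' *ᵥ r1) := by
  subst hA0 hB0 hR00 hR10
  have hMr0 : (A 0 - lam0 • B 0) *ᵥ R0 0 = 0 := by rw [sub_mulVec, smul_mulVec, hr0, sub_self]
  have h := mulVec_bordered_inverse_solution hl0 hl1 hn00 hn01 hn10 hn11 hMr0 hZ
    (mulVec_deriv_of_eventually_eigen_eq hA hB hR0 hR1 hs hp heq0 hs0 hp0)
    (mulVec_deriv_of_eventually_chain_eq hA hB hR0 hR1 hs heq1 hs0)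
  set x0 := s' • R1 0 + p' • R0 0 +
    (A 0 - lam0 • B 0 + vecMulVec (B 0 *ᵥ R1 0) (l1 ᵥ* B 0))⁻¹ *ᵥ
      (lam0 • (B' *ᵥ R0 0) - A' *ᵥ R0 0)
  rw [show B' *ᵥ R0 0 + B 0 *ᵥ x0 - A' *ᵥ R1 0 + lam0 • (B' *ᵥ R1 0) =
    (B' *ᵥ R0 0 - A' *ᵥ R1 0 + lam0 • (B' *ᵥ R1 0)) + B 0 *ᵥ x0 by abel, h]
  abel

/-- Under the generalized Jordan chain hypotheses and the versal deformation
hypotheses, if `Z := A₀ − λ₀ B₀ + (B₀ r₁)(l₁ᵀ B₀)` is invertible and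
`x₀ := s′(0) r₁ + p′(0) r₀ + Z⁻¹(λ₀ B′(0) r₀ − A′(0) r₀)`, then
`x₁ := s′(0) r₀ + Z⁻¹(B′(0) r₀ + B₀ x₀ − A′(0) r₁ + λ₀ B′(0) r₁)` satisfies
`(A₀ − λ₀ B₀) x₁ = B′(0) r₀ + B₀ x₀ + s′(0) B₀ r₁ − A′(0) r₁ + λ₀ B′(0) r₁`. -/
theorem stmt8 {n : ℕ} (hn : 0 < n)
    (A0 B0 : Matrix (Fin n) (Fin n) ℝ) (lam0 : ℝ)
    (r0 r1 l0 l1 : Fin n → ℝ)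
    (hr0 : A0 *ᵥ r0 = lam0 • (B0 *ᵥ r0))
    (hr1 : A0 *ᵥ r1 = lam0 • (B0 *ᵥ r1) + B0 *ᵥ r0)
    (hl0 : l0 ᵥ* (A0 - lam0 • B0) = 0)
    (hl1 : l1 ᵥ* (A0 - lam0 • B0) = l0 ᵥ* B0)
    (hn00 : (l0 ᵥ* B0) ⬝ᵥ r0 = 0)
    (hn01 : (l0 ᵥ* B0) ⬝ᵥ r1 = 1)
    (hn10 : (l1 ᵥ* B0) ⬝ᵥ r0 = 1)
    (hn11 : (l1 ᵥ* B0) ⬝ᵥ r1 = 0)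
    -- versal deformation hypotheses
    (A B : ℝ → Matrix (Fin n) (Fin n) ℝ)
    (R0 R1 : ℝ → Fin n → ℝ) (s p : ℝ → ℝ)
    (A' B' : Matrix (Fin n) (Fin n) ℝ) (R0' R1' : Fin n → ℝ) (s' p' : ℝ)
    (hA : ∀ i j, HasDerivAt (fun t => A t i j) (A' i j) 0)
    (hB : ∀ i j, HasDerivAt (fun t => B t i j) (B' i j) 0)
    (hR0 : HasDerivAt R0 R0' 0) (hR1 : HasDerivAt R1 R1' 0)
    (hs : HasDerivAt s s' 0) (hp : HasDerivAt p p' 0)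
    (heq0 : ∀ᶠ t in nhds 0,
      A t *ᵥ R0 t = (lam0 + s t) • (B t *ᵥ R0 t) + p t • (B t *ᵥ R1 t))
    (heq1 : ∀ᶠ t in nhds 0,
      A t *ᵥ R1 t = (lam0 + s t) • (B t *ᵥ R1 t) + B t *ᵥ R0 t)
    (hA0 : A 0 = A0) (hB0 : B 0 = B0)
    (hs0 : s 0 = 0) (hp0 : p 0 = 0)
    (hR00 : R0 0 = r0) (hR10 : R1 0 = r1)
    (hZ : IsUnit (A0 - lam0 • B0 + vecMulVec (B0 *ᵥ r1) (l1 ᵥ* B0))) :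
    (A0 - lam0 • B0) *ᵥ
        (s' • r0 +
          (A0 - lam0 • B0 + vecMulVec (B0 *ᵥ r1) (l1 ᵥ* B0))⁻¹ *ᵥ
            (B' *ᵥ r0 +
              B0 *ᵥ (s' • r1 + p' • r0 +
          (A0 - lam0 • B0 + vecMulVec (B0 *ᵥ r1) (l1 ᵥ* B0))⁻¹ *ᵥ
            (lam0 • (B' *ᵥ r0) - A' *ᵥ r0)) -
              A' *ᵥ r1 + lam0 • (B' *ᵥ r1))) =
      B' *ᵥ r0 +
        B0 *ᵥ (s' • r1 + p' • r0 +
          (A0 - lam0 • B0 + vecMulVec (B0 *ᵥ r1) (l1 ᵥ* B0))⁻¹ *ᵥ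
            (lam0 • (B' *ᵥ r0) - A' *ᵥ r0)) +
        s' • (B0 *ᵥ r1) - A' *ᵥ r1 + lam0 • (B' *ᵥ r1) :=
  stmt8_general A0 B0 lam0 r0 r1 l0 l1 hr0 hl0 hl1 hn00 hn01 hn10 hn11 A B R0 R1 s p A' B' R0' R1'
    s' p' hA hB hR0 hR1 hs hp heq0 heq1 hA0 hB0 hs0 hp0 hR00 hR10 hZ
end

section
/- Under the Rankine–Hugoniot curve hypotheses, assume additionally that λ : ℝⁿ → ℝ is differentiable, that s(ξ) = λ(U⁻(ξ)) for all ξ, and that (DF(U⁻(ξ)) − λ(U⁻(ξ)) DG(U⁻(ξ))) (U⁻)′(ξ) = 0 for all ξ (that is, (U⁻)′(ξ) is a generalized eigenvector of the pair (DF, DG) at U⁻(ξ) with eigenvalue λ(U⁻(ξ))). Then for every ξ the composite-wave equation holds: (DF(U⁺(ξ)) − λ(U⁻(ξ)) DG(U⁺(ξ))) (U⁺)′(ξ) = (∇λ(U⁻(ξ)) · (U⁻)′(ξ)) · (G(U⁺(ξ)) − G(U⁻(ξ))). -/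
/-!
Differentiating the Rankine–Hugoniot relation along the curve gives
`DF(U⁺)U⁺′ − DF(U⁻)U⁻′ = s′ (G(U⁺) − G(U⁻)) + s (DG(U⁺)U⁺′ − DG(U⁻)U⁻′)`.
When `s = λ(U⁻)`, the chain rule gives `s′ = ∇λ(U⁻)·U⁻′`, and the eigenvector condition
`DF(U⁻)U⁻′ = λ(U⁻) DG(U⁻)U⁻′` cancels the two `U⁻′` terms, leaving the composite-wave equation.
-/

open Matrix

section RankineHugoniot

variable {E V : Type*} [NormedAddCommGroup E] [NormedSpace ℝ E]
  [NormedAddCommGroup V] [NormedSpace ℝ V]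
  {F G : E → V} {Um Up : ℝ → E} {Um' Up' : E} {ξ : ℝ}

theorem rankineHugoniot_deriv_eq {s : ℝ → ℝ} {s' : ℝ}
    (hFm : DifferentiableAt ℝ F (Um ξ)) (hFp : DifferentiableAt ℝ F (Up ξ))
    (hGm : DifferentiableAt ℝ G (Um ξ)) (hGp : DifferentiableAt ℝ G (Up ξ))
    (hUm : HasDerivAt Um Um' ξ) (hUp : HasDerivAt Up Up' ξ) (hs : HasDerivAt s s' ξ)
    (hRH : ∀ t, F (Up t) - F (Um t) = s t • (G (Up t) - G (Um t))) :
    fderiv ℝ F (Up ξ) Up' - fderiv ℝ F (Um ξ) Um' =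
      s' • (G (Up ξ) - G (Um ξ)) + s ξ • (fderiv ℝ G (Up ξ) Up' - fderiv ℝ G (Um ξ) Um') := by
  have hLHS : HasDerivAt (fun t => F (Up t) - F (Um t))
      (fderiv ℝ F (Up ξ) Up' - fderiv ℝ F (Um ξ) Um') ξ :=
    (hFp.hasFDerivAt.comp_hasDerivAt ξ hUp).sub (hFm.hasFDerivAt.comp_hasDerivAt ξ hUm)
  have hRHS : HasDerivAt (fun t => s t • (G (Up t) - G (Um t)))
      (s ξ • (fderiv ℝ G (Up ξ) Up' - fderiv ℝ G (Um ξ) Um') + s' • (G (Up ξ) - G (Um ξ))) ξ :=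
    hs.smul ((hGp.hasFDerivAt.comp_hasDerivAt ξ hUp).sub (hGm.hasFDerivAt.comp_hasDerivAt ξ hUm))
  rw [add_comm]
  exact hLHS.unique (funext hRH ▸ hRHS)

theorem compositeWave_of_rankineHugoniot {lam : E → ℝ}
    (hFm : DifferentiableAt ℝ F (Um ξ)) (hFp : DifferentiableAt ℝ F (Up ξ))
    (hGm : DifferentiableAt ℝ G (Um ξ)) (hGp : DifferentiableAt ℝ G (Up ξ))
    (hlam : DifferentiableAt ℝ lam (Um ξ))
    (hUm : HasDerivAt Um Um' ξ) (hUp : HasDerivAt Up Up' ξ)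
    (hRH : ∀ t, F (Up t) - F (Um t) = lam (Um t) • (G (Up t) - G (Um t)))
    (heig : fderiv ℝ F (Um ξ) Um' = lam (Um ξ) • fderiv ℝ G (Um ξ) Um') :
    fderiv ℝ F (Up ξ) Up' - lam (Um ξ) • fderiv ℝ G (Up ξ) Up' =
      fderiv ℝ lam (Um ξ) Um' • (G (Up ξ) - G (Um ξ)) := by
  have hs : HasDerivAt (fun t => lam (Um t)) (fderiv ℝ lam (Um ξ) Um') ξ :=
    hlam.hasFDerivAt.comp_hasDerivAt ξ hUm
  have key := rankineHugoniot_deriv_eq hFm hFp hGm hGp hUm hUp hs hRH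
  rw [heig] at key
  linear_combination (norm := module) key

end RankineHugoniot

theorem stmt10_general {n : ℕ}
    (F G : (Fin n → ℝ) → (Fin n → ℝ))
    (DF DG : (Fin n → ℝ) → Matrix (Fin n) (Fin n) ℝ)
    (hF : Differentiable ℝ F) (hG : Differentiable ℝ G)
    (hDF : ∀ U v, fderiv ℝ F U v = DF U *ᵥ v)
    (hDG : ∀ U v, fderiv ℝ G U v = DG U *ᵥ v)
    (Um Up : ℝ → Fin n → ℝ) (s : ℝ → ℝ)
    (Um' Up' : ℝ → Fin n → ℝ)
    (hUm : ∀ ξ, HasDerivAt Um (Um' ξ) ξ)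
    (hUp : ∀ ξ, HasDerivAt Up (Up' ξ) ξ)
    (hRH : ∀ ξ, F (Up ξ) - F (Um ξ) = s ξ • (G (Up ξ) - G (Um ξ)))
    (lam : (Fin n → ℝ) → ℝ) (gradlam : (Fin n → ℝ) → Fin n → ℝ)
    (hlam : Differentiable ℝ lam)
    (hgrad : ∀ U v, fderiv ℝ lam U v = gradlam U ⬝ᵥ v)
    (hslam : ∀ ξ, s ξ = lam (Um ξ))
    (heig : ∀ ξ, (DF (Um ξ) - lam (Um ξ) • DG (Um ξ)) *ᵥ Um' ξ = 0) :
    ∀ ξ, (DF (Up ξ) - lam (Um ξ) • DG (Up ξ)) *ᵥ Up' ξ =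
      (gradlam (Um ξ) ⬝ᵥ Um' ξ) • (G (Up ξ) - G (Um ξ)) := by
  intro ξ
  have hRH_lam : ∀ t, F (Up t) - F (Um t) = lam (Um t) • (G (Up t) - G (Um t)) :=
    fun t => hslam t ▸ hRH t
  have heig_fderiv : fderiv ℝ F (Um ξ) (Um' ξ) = lam (Um ξ) • fderiv ℝ G (Um ξ) (Um' ξ) := by
    rw [hDF, hDG, ← smul_mulVec, ← sub_eq_zero, ← sub_mulVec, heig]
  rw [sub_mulVec, smul_mulVec, ← hDF, ← hDG, ← hgrad]
  exact compositeWave_of_rankineHugoniot (hF _) (hF _) (hG _) (hG _) (hlam _)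
    (hUm ξ) (hUp ξ) hRH_lam heig_fderiv

/-- Under the Rankine–Hugoniot curve hypotheses, if moreover `s(ξ) = λ(U⁻(ξ))` and
`(DF(U⁻) − λ(U⁻) DG(U⁻))(U⁻)′ = 0` for all `ξ`, then the composite-wave equation
`(DF(U⁺) − λ(U⁻) DG(U⁺))(U⁺)′ = (∇λ(U⁻)·(U⁻)′)(G(U⁺) − G(U⁻))` holds. -/
theorem stmt10 {n : ℕ} (hn : 0 < n)
    (F G : (Fin n → ℝ) → (Fin n → ℝ))
    (DF DG : (Fin n → ℝ) → Matrix (Fin n) (Fin n) ℝ)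
    (hF : Differentiable ℝ F) (hG : Differentiable ℝ G)
    (hDF : ∀ U v, fderiv ℝ F U v = DF U *ᵥ v)
    (hDG : ∀ U v, fderiv ℝ G U v = DG U *ᵥ v)
    (Um Up : ℝ → Fin n → ℝ) (s : ℝ → ℝ)
    (Um' Up' : ℝ → Fin n → ℝ) (s' : ℝ → ℝ)
    (hUm : ∀ ξ, HasDerivAt Um (Um' ξ) ξ)
    (hUp : ∀ ξ, HasDerivAt Up (Up' ξ) ξ)
    (hs : ∀ ξ, HasDerivAt s (s' ξ) ξ)
    (hRH : ∀ ξ, F (Up ξ) - F (Um ξ) = s ξ • (G (Up ξ) - G (Um ξ)))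
    (lam : (Fin n → ℝ) → ℝ) (gradlam : (Fin n → ℝ) → Fin n → ℝ)
    (hlam : Differentiable ℝ lam)
    (hgrad : ∀ U v, fderiv ℝ lam U v = gradlam U ⬝ᵥ v)
    (hslam : ∀ ξ, s ξ = lam (Um ξ))
    (heig : ∀ ξ, (DF (Um ξ) - lam (Um ξ) • DG (Um ξ)) *ᵥ Um' ξ = 0) :
    ∀ ξ, (DF (Up ξ) - lam (Um ξ) • DG (Up ξ)) *ᵥ Up' ξ =
      (gradlam (Um ξ) ⬝ᵥ Um' ξ) • (G (Up ξ) - G (Um ξ)) :=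
  stmt10_general F G DF DG hF hG hDF hDG Um Up s Um' Up' hUm hUp hRH lam gradlam hlam hgrad hslam
    heig
end

section
/- Under the composite-wave hypotheses, let ξ be fixed, let μ ∈ ℝ and let l ∈ ℝⁿ be a row vector satisfying lᵀ DF(U⁺(ξ)) = μ lᵀ DG(U⁺(ξ)) (a left generalized eigenvector of (DF, DG) at U⁺(ξ) with eigenvalue μ). Then (μ − λ(U⁻(ξ))) · (lᵀ DG(U⁺(ξ)) (U⁺)′(ξ)) = (∇λ(U⁻(ξ)) · (U⁻)′(ξ)) · (lᵀ (G(U⁺(ξ)) − G(U⁻(ξ)))). -/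
/-!
Differentiating the Rankine–Hugoniot condition along the curves gives
`DF(U⁺)U⁺′ − DF(U⁻)U⁻′ = (∇λ·U⁻′)(G(U⁺) − G(U⁻)) + λ(DG(U⁺)U⁺′ − DG(U⁻)U⁻′)`.
Pairing with the left eigenvector `l` turns `lᵀDF(U⁺)` into `μ lᵀDG(U⁺)`, and the eigenvalue
condition on `U⁻′` makes the `U⁻′` terms on both sides cancel.
-/

open Matrix Filter Topology

theorem fderiv_sub_fderiv_eq_of_rankineHugoniot
    {E V : Type*} [NormedAddCommGroup E] [NormedSpace ℝ E]
    [NormedAddCommGroup V] [NormedSpace ℝ V]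
    {F G : E → V} {lam : E → ℝ} {Um Up : ℝ → E} {Um' Up' : E} {ξ : ℝ}
    (hFp : DifferentiableAt ℝ F (Up ξ)) (hFm : DifferentiableAt ℝ F (Um ξ))
    (hGp : DifferentiableAt ℝ G (Up ξ)) (hGm : DifferentiableAt ℝ G (Um ξ))
    (hlam : DifferentiableAt ℝ lam (Um ξ))
    (hUp : HasDerivAt Up Up' ξ) (hUm : HasDerivAt Um Um' ξ)
    (hRH : ∀ᶠ t in 𝓝 ξ, F (Up t) - F (Um t) = lam (Um t) • (G (Up t) - G (Um t))) :
    fderiv ℝ F (Up ξ) Up' - fderiv ℝ F (Um ξ) Um' =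
      fderiv ℝ lam (Um ξ) Um' • (G (Up ξ) - G (Um ξ)) +
        lam (Um ξ) • (fderiv ℝ G (Up ξ) Up' - fderiv ℝ G (Um ξ) Um') := by
  have hlhs : HasDerivAt (fun t => F (Up t) - F (Um t))
      (fderiv ℝ F (Up ξ) Up' - fderiv ℝ F (Um ξ) Um') ξ :=
    (hFp.hasFDerivAt.comp_hasDerivAt ξ hUp).sub (hFm.hasFDerivAt.comp_hasDerivAt ξ hUm)
  have hrhs : HasDerivAt (fun t => lam (Um t) • (G (Up t) - G (Um t)))
      (lam (Um ξ) • (fderiv ℝ G (Up ξ) Up' - fderiv ℝ G (Um ξ) Um') +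
        fderiv ℝ lam (Um ξ) Um' • (G (Up ξ) - G (Um ξ))) ξ :=
    (hlam.hasFDerivAt.comp_hasDerivAt ξ hUm).smul
      ((hGp.hasFDerivAt.comp_hasDerivAt ξ hUp).sub (hGm.hasFDerivAt.comp_hasDerivAt ξ hUm))
  rw [add_comm]
  exact (hlhs.congr_of_eventuallyEq (hRH.mono fun _ h => h.symm)).unique hrhs

theorem sub_mul_dotProduct_eq_of_leftEigen
    {m R : Type*} [Fintype m] [CommRing R]
    {Ap Am Bp Bm : Matrix m m R} {up um g l : m → R} {lam μ c : R}
    (hdiff : Ap *ᵥ up - Am *ᵥ um = c • g + lam • (Bp *ᵥ up - Bm *ᵥ um))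
    (hright : (Am - lam • Bm) *ᵥ um = 0)
    (hleft : l ᵥ* Ap = μ • (l ᵥ* Bp)) :
    (μ - lam) * ((l ᵥ* Bp) ⬝ᵥ up) = c * (l ⬝ᵥ g) := by
  have hpaired := congrArg (l ⬝ᵥ ·) hdiff
  have hright_paired := congrArg (l ⬝ᵥ ·) hright
  simp only [dotProduct_sub, dotProduct_add, dotProduct_smul, dotProduct_mulVec, hleft,
    smul_dotProduct, smul_eq_mul] at hpaired
  simp only [sub_mulVec, smul_mulVec, dotProduct_sub, dotProduct_smul, dotProduct_mulVec,
    smul_eq_mul, dotProduct_zero] at hright_paired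
  linear_combination hpaired + hright_paired

theorem stmt11_general {n : ℕ}
    (F G : (Fin n → ℝ) → (Fin n → ℝ))
    (DF DG : (Fin n → ℝ) → Matrix (Fin n) (Fin n) ℝ)
    (hF : Differentiable ℝ F) (hG : Differentiable ℝ G)
    (hDF : ∀ U v, fderiv ℝ F U v = DF U *ᵥ v)
    (hDG : ∀ U v, fderiv ℝ G U v = DG U *ᵥ v)
    (lam : (Fin n → ℝ) → ℝ) (gradlam : (Fin n → ℝ) → Fin n → ℝ)
    (hlam : Differentiable ℝ lam)
    (hgrad : ∀ U v, fderiv ℝ lam U v = gradlam U ⬝ᵥ v)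
    (Um Up : ℝ → Fin n → ℝ) (Um' Up' : ℝ → Fin n → ℝ)
    (hUm : ∀ ξ, HasDerivAt Um (Um' ξ) ξ)
    (hUp : ∀ ξ, HasDerivAt Up (Up' ξ) ξ)
    (hRH : ∀ ξ, F (Up ξ) - F (Um ξ) = lam (Um ξ) • (G (Up ξ) - G (Um ξ)))
    (heig : ∀ ξ, (DF (Um ξ) - lam (Um ξ) • DG (Um ξ)) *ᵥ Um' ξ = 0)
    (ξ : ℝ) (μ : ℝ) (l : Fin n → ℝ)
    (hleft : l ᵥ* DF (Up ξ) = μ • (l ᵥ* DG (Up ξ))) :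
    (μ - lam (Um ξ)) * ((l ᵥ* DG (Up ξ)) ⬝ᵥ Up' ξ) =
      (gradlam (Um ξ) ⬝ᵥ Um' ξ) * (l ⬝ᵥ (G (Up ξ) - G (Um ξ))) := by
  have hdiff := fderiv_sub_fderiv_eq_of_rankineHugoniot (hF _) (hF _) (hG _) (hG _) (hlam _)
    (hUp ξ) (hUm ξ) (Eventually.of_forall hRH)
  rw [hDF, hDF, hDG, hDG, hgrad] at hdiff
  exact sub_mul_dotProduct_eq_of_leftEigen hdiff (heig ξ) hleft

/-- Under the composite-wave hypotheses, if `lᵀ DF(U⁺(ξ)) = μ lᵀ DG(U⁺(ξ))` is a left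
generalized eigenvector with eigenvalue `μ`, then
`(μ − λ(U⁻(ξ)))(lᵀ DG(U⁺(ξ))(U⁺)′(ξ)) = (∇λ(U⁻(ξ))·(U⁻)′(ξ))(lᵀ(G(U⁺(ξ)) − G(U⁻(ξ))))`. -/
theorem stmt11 {n : ℕ} (hn : 0 < n)
    (F G : (Fin n → ℝ) → (Fin n → ℝ))
    (DF DG : (Fin n → ℝ) → Matrix (Fin n) (Fin n) ℝ)
    (hF : Differentiable ℝ F) (hG : Differentiable ℝ G)
    (hDF : ∀ U v, fderiv ℝ F U v = DF U *ᵥ v)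
    (hDG : ∀ U v, fderiv ℝ G U v = DG U *ᵥ v)
    (lam : (Fin n → ℝ) → ℝ) (gradlam : (Fin n → ℝ) → Fin n → ℝ)
    (hlam : Differentiable ℝ lam)
    (hgrad : ∀ U v, fderiv ℝ lam U v = gradlam U ⬝ᵥ v)
    (Um Up : ℝ → Fin n → ℝ) (Um' Up' : ℝ → Fin n → ℝ)
    (hUm : ∀ ξ, HasDerivAt Um (Um' ξ) ξ)
    (hUp : ∀ ξ, HasDerivAt Up (Up' ξ) ξ)
    (hRH : ∀ ξ, F (Up ξ) - F (Um ξ) = lam (Um ξ) • (G (Up ξ) - G (Um ξ)))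
    (heig : ∀ ξ, (DF (Um ξ) - lam (Um ξ) • DG (Um ξ)) *ᵥ Um' ξ = 0)
    (ξ : ℝ) (μ : ℝ) (l : Fin n → ℝ)
    (hleft : l ᵥ* DF (Up ξ) = μ • (l ᵥ* DG (Up ξ))) :
    (μ - lam (Um ξ)) * ((l ᵥ* DG (Up ξ)) ⬝ᵥ Up' ξ) =
      (gradlam (Um ξ) ⬝ᵥ Um' ξ) * (l ⬝ᵥ (G (Up ξ) - G (Um ξ))) :=
  stmt11_general F G DF DG hF hG hDF hDG lam gradlam hlam hgrad Um Up Um' Up' hUm hUp hRH heig ξ μ l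
    hleft
end

section
/- Under the composite-wave hypotheses, let ξ be fixed, let μ ∈ ℝ and let l ∈ ℝⁿ be a row vector satisfying lᵀ DF(U⁺(ξ)) = μ lᵀ DG(U⁺(ξ)). If μ = λ(U⁻(ξ)) and ∇λ(U⁻(ξ)) · (U⁻)′(ξ) ≠ 0, then lᵀ (G(U⁺(ξ)) − G(U⁻(ξ))) = 0; that is, the vector G(U⁺(ξ)) − G(U⁻(ξ)) is orthogonal to the left eigenvector l. -/
/-!
Differentiate the Rankine–Hugoniot identity along `ξ` and pair the result with `l`. The left
eigenvector relation at `U⁺` and the right eigenvector relation at `U⁻` turn the derivative of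
the flux jump into `λ` times the derivative of the `G`-jump, so the only surviving term is
`(∇λ · (U⁻)′) (l · (G(U⁺) − G(U⁻)))`, which must therefore vanish.
-/

open Matrix

theorem hasDerivAt_comp_of_fderiv_apply {E F : Type*} [NormedAddCommGroup E] [NormedSpace ℝ E]
    [NormedAddCommGroup F] [NormedSpace ℝ F] {f : E → F} {L : E → F} {u : ℝ → E} {u' : E}
    {t : ℝ} (hf : DifferentiableAt ℝ f (u t)) (hL : ∀ v, fderiv ℝ f (u t) v = L v)
    (hu : HasDerivAt u u' t) : HasDerivAt (fun s => f (u s)) (L u') t := by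
  rw [← hL]
  exact hf.hasFDerivAt.comp_hasDerivAt t hu

theorem HasDerivAt.eq_smul_add_of_eq_smul {𝕜 E : Type*} [NontriviallyNormedField 𝕜]
    [NormedAddCommGroup E] [NormedSpace 𝕜 E] {f g : 𝕜 → E} {c : 𝕜 → 𝕜} {f' g' : E} {c' t : 𝕜}
    (hfcg : ∀ s, f s = c s • g s) (hf : HasDerivAt f f' t) (hc : HasDerivAt c c' t)
    (hg : HasDerivAt g g' t) : f' = c t • g' + c' • g t := by
  rw [show f = fun s => c s • g s from funext hfcg] at hf
  exact hf.unique (hc.smul hg)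

section LeftEigenvector

variable {R ι κ κ' : Type*} [CommRing R] [Fintype ι] [Fintype κ] [Fintype κ']
  {c : R} {l : ι → R} {A B : Matrix ι κ R} {A' B' : Matrix ι κ' R} {v : κ → R} {v' : κ' → R}

theorem dotProduct_mulVec_sub_mulVec_eq_mul
    (hl : l ᵥ* A = c • (l ᵥ* B)) (hv' : (A' - c • B') *ᵥ v' = 0) :
    l ⬝ᵥ (A *ᵥ v - A' *ᵥ v') = c * l ⬝ᵥ (B *ᵥ v - B' *ᵥ v') := by
  rw [sub_mulVec, smul_mulVec, sub_eq_zero] at hv'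
  rw [dotProduct_sub, dotProduct_mulVec, hl, hv', smul_dotProduct, dotProduct_smul,
    ← dotProduct_mulVec, dotProduct_sub, mul_sub, smul_eq_mul, smul_eq_mul]

theorem dotProduct_eq_zero_of_mulVec_sub_mulVec_eq [NoZeroDivisors R] {c' : R} {w : ι → R}
    (hl : l ᵥ* A = c • (l ᵥ* B)) (hv' : (A' - c • B') *ᵥ v' = 0)
    (h : A *ᵥ v - A' *ᵥ v' = c • (B *ᵥ v - B' *ᵥ v') + c' • w) (hc' : c' ≠ 0) :
    l ⬝ᵥ w = 0 := by
  have hpair := congrArg (l ⬝ᵥ ·) h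
  simp only [dotProduct_mulVec_sub_mulVec_eq_mul hl hv', dotProduct_add, dotProduct_smul,
    smul_eq_mul, left_eq_add, mul_eq_zero] at hpair
  exact hpair.resolve_left hc'

end LeftEigenvector

theorem stmt12_general {n : ℕ}
    (F G : (Fin n → ℝ) → (Fin n → ℝ))
    (DF DG : (Fin n → ℝ) → Matrix (Fin n) (Fin n) ℝ)
    (hF : Differentiable ℝ F) (hG : Differentiable ℝ G)
    (hDF : ∀ U v, fderiv ℝ F U v = DF U *ᵥ v)
    (hDG : ∀ U v, fderiv ℝ G U v = DG U *ᵥ v)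
    (lam : (Fin n → ℝ) → ℝ) (gradlam : (Fin n → ℝ) → Fin n → ℝ)
    (hlam : Differentiable ℝ lam)
    (hgrad : ∀ U v, fderiv ℝ lam U v = gradlam U ⬝ᵥ v)
    (Um Up : ℝ → Fin n → ℝ) (Um' Up' : ℝ → Fin n → ℝ)
    (hUm : ∀ ξ, HasDerivAt Um (Um' ξ) ξ)
    (hUp : ∀ ξ, HasDerivAt Up (Up' ξ) ξ)
    (hRH : ∀ ξ, F (Up ξ) - F (Um ξ) = lam (Um ξ) • (G (Up ξ) - G (Um ξ)))
    (heig : ∀ ξ, (DF (Um ξ) - lam (Um ξ) • DG (Um ξ)) *ᵥ Um' ξ = 0)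
    (ξ : ℝ) (μ : ℝ) (l : Fin n → ℝ)
    (hleft : l ᵥ* DF (Up ξ) = μ • (l ᵥ* DG (Up ξ)))
    (hmu : μ = lam (Um ξ)) (hnz : gradlam (Um ξ) ⬝ᵥ Um' ξ ≠ 0) :
    l ⬝ᵥ (G (Up ξ) - G (Um ξ)) = 0 := by
  have hFp := hasDerivAt_comp_of_fderiv_apply (hF _) (hDF _) (hUp ξ)
  have hFm := hasDerivAt_comp_of_fderiv_apply (hF _) (hDF _) (hUm ξ)
  have hGp := hasDerivAt_comp_of_fderiv_apply (hG _) (hDG _) (hUp ξ)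
  have hGm := hasDerivAt_comp_of_fderiv_apply (hG _) (hDG _) (hUm ξ)
  have hlamm := hasDerivAt_comp_of_fderiv_apply (hlam _) (hgrad _) (hUm ξ)
  have hRH' := (hFp.sub hFm).eq_smul_add_of_eq_smul hRH hlamm (hGp.sub hGm)
  subst hmu
  exact dotProduct_eq_zero_of_mulVec_sub_mulVec_eq hleft (heig ξ) hRH' hnz

/-- Under the composite-wave hypotheses, if `l` is a left generalized eigenvector of
`(DF, DG)` at `U⁺(ξ)` with eigenvalue `μ = λ(U⁻(ξ))` and `∇λ(U⁻(ξ))·(U⁻)′(ξ) ≠ 0`,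
then `lᵀ(G(U⁺(ξ)) − G(U⁻(ξ))) = 0`. -/
theorem stmt12 {n : ℕ} (hn : 0 < n)
    (F G : (Fin n → ℝ) → (Fin n → ℝ))
    (DF DG : (Fin n → ℝ) → Matrix (Fin n) (Fin n) ℝ)
    (hF : Differentiable ℝ F) (hG : Differentiable ℝ G)
    (hDF : ∀ U v, fderiv ℝ F U v = DF U *ᵥ v)
    (hDG : ∀ U v, fderiv ℝ G U v = DG U *ᵥ v)
    (lam : (Fin n → ℝ) → ℝ) (gradlam : (Fin n → ℝ) → Fin n → ℝ)
    (hlam : Differentiable ℝ lam)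
    (hgrad : ∀ U v, fderiv ℝ lam U v = gradlam U ⬝ᵥ v)
    (Um Up : ℝ → Fin n → ℝ) (Um' Up' : ℝ → Fin n → ℝ)
    (hUm : ∀ ξ, HasDerivAt Um (Um' ξ) ξ)
    (hUp : ∀ ξ, HasDerivAt Up (Up' ξ) ξ)
    (hRH : ∀ ξ, F (Up ξ) - F (Um ξ) = lam (Um ξ) • (G (Up ξ) - G (Um ξ)))
    (heig : ∀ ξ, (DF (Um ξ) - lam (Um ξ) • DG (Um ξ)) *ᵥ Um' ξ = 0)
    (ξ : ℝ) (μ : ℝ) (l : Fin n → ℝ)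
    (hleft : l ᵥ* DF (Up ξ) = μ • (l ᵥ* DG (Up ξ)))
    (hmu : μ = lam (Um ξ)) (hnz : gradlam (Um ξ) ⬝ᵥ Um' ξ ≠ 0) :
    l ⬝ᵥ (G (Up ξ) - G (Um ξ)) = 0 :=
  stmt12_general F G DF DG hF hG hDF hDG lam gradlam hlam hgrad Um Up Um' Up' hUm hUp hRH heig ξ μ l
    hleft hmu hnz
end

section
/- Under the composite-wave hypotheses, let ξ be fixed, let μ ∈ ℝ and let l ∈ ℝⁿ be a row vector satisfying lᵀ DF(U⁺(ξ)) = μ lᵀ DG(U⁺(ξ)). If lᵀ (G(U⁺(ξ)) − G(U⁻(ξ))) = 0 and lᵀ DG(U⁺(ξ)) (U⁺)′(ξ) ≠ 0, then μ = λ(U⁻(ξ)); in particular the matrix DF(U⁺(ξ)) − λ(U⁻(ξ)) DG(U⁺(ξ)) is singular. -/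
/-!
Pair the Rankine–Hugoniot identity with `l` and differentiate at `ξ`. Since `lᵀ(G(U⁺) − G(U⁻))`
vanishes at `ξ`, the derivative of `λ(U⁻)` drops out, and the eigenvector relation along `U⁻`
cancels the `U⁻` terms, leaving `lᵀ DF(U⁺) (U⁺)′ = λ(U⁻) lᵀ DG(U⁺) (U⁺)′`. Comparing with
`lᵀ DF(U⁺) = μ lᵀ DG(U⁺)` and cancelling the nonzero factor gives `μ = λ(U⁻)`, and then `l` is a
left null vector of `DF(U⁺) − λ(U⁻) DG(U⁺)`.
-/

open Matrix

theorem HasDerivAt.const_dotProduct {ι : Type*} [Fintype ι] {f : ℝ → ι → ℝ} {x : ℝ}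
    {v : ι → ℝ} (hf : HasDerivAt f v x) (l : ι → ℝ) :
    HasDerivAt (fun t => l ⬝ᵥ f t) (l ⬝ᵥ v) x := by
  simpa only [dotProduct] using
    HasDerivAt.fun_sum fun i _ => (hasDerivAt_pi.1 hf i).const_mul (l i)

theorem DifferentiableAt.hasDerivAt_comp_of_fderiv_eq_mulVec {ι κ : Type*} [Fintype ι]
    [Fintype κ] {F : (ι → ℝ) → κ → ℝ} {A : Matrix κ ι ℝ} {u : ℝ → ι → ℝ} {u' : ι → ℝ} {x : ℝ}
    (hF : DifferentiableAt ℝ F (u x)) (hA : ∀ v, fderiv ℝ F (u x) v = A *ᵥ v)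
    (hu : HasDerivAt u u' x) : HasDerivAt (fun t => F (u t)) (A *ᵥ u') x := by
  rw [← hA]
  exact hF.hasFDerivAt.comp_hasDerivAt x hu

theorem HasDerivAt.eq_mul_of_eq_mul_of_eq_zero {a b c : ℝ → ℝ} {a' b' x : ℝ}
    (ha : HasDerivAt a a' x) (hb : HasDerivAt b b' x) (hc : DifferentiableAt ℝ c x)
    (habc : ∀ t, a t = c t * b t) (hbx : b x = 0) : a' = c x * b' := by
  have hcb := hc.hasDerivAt.fun_mul hb
  rw [hbx, mul_zero, zero_add, ← funext habc] at hcb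
  exact ha.unique hcb

theorem Matrix.det_sub_smul_eq_zero_of_vecMul_eq_smul {ι : Type*} [Fintype ι] [DecidableEq ι]
    {A B : Matrix ι ι ℝ} {l : ι → ℝ} {μ : ℝ} (hl : l ≠ 0) (h : l ᵥ* A = μ • (l ᵥ* B)) :
    (A - μ • B).det = 0 :=
  exists_vecMul_eq_zero_iff.mp ⟨l, hl, by rw [vecMul_sub, vecMul_smul, h, sub_self]⟩

theorem stmt13_general {n : ℕ}
    (F G : (Fin n → ℝ) → (Fin n → ℝ))
    (DF DG : (Fin n → ℝ) → Matrix (Fin n) (Fin n) ℝ)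
    (hF : Differentiable ℝ F) (hG : Differentiable ℝ G)
    (hDF : ∀ U v, fderiv ℝ F U v = DF U *ᵥ v)
    (hDG : ∀ U v, fderiv ℝ G U v = DG U *ᵥ v)
    (lam : (Fin n → ℝ) → ℝ)
    (hlam : Differentiable ℝ lam)
    (Um Up : ℝ → Fin n → ℝ) (Um' Up' : ℝ → Fin n → ℝ)
    (hUm : ∀ ξ, HasDerivAt Um (Um' ξ) ξ)
    (hUp : ∀ ξ, HasDerivAt Up (Up' ξ) ξ)
    (hRH : ∀ ξ, F (Up ξ) - F (Um ξ) = lam (Um ξ) • (G (Up ξ) - G (Um ξ)))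
    (heig : ∀ ξ, (DF (Um ξ) - lam (Um ξ) • DG (Um ξ)) *ᵥ Um' ξ = 0)
    (ξ : ℝ) (μ : ℝ) (l : Fin n → ℝ)
    (hleft : l ᵥ* DF (Up ξ) = μ • (l ᵥ* DG (Up ξ)))
    (hGorth : l ⬝ᵥ (G (Up ξ) - G (Um ξ)) = 0)
    (hnz : (l ᵥ* DG (Up ξ)) ⬝ᵥ Up' ξ ≠ 0) :
    μ = lam (Um ξ) ∧ (DF (Up ξ) - lam (Um ξ) • DG (Up ξ)).det = 0 := by
  have hFd := ((hF _).hasDerivAt_comp_of_fderiv_eq_mulVec (hDF _) (hUp ξ)).fun_sub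
    ((hF _).hasDerivAt_comp_of_fderiv_eq_mulVec (hDF _) (hUm ξ)) |>.const_dotProduct l
  have hGd := ((hG _).hasDerivAt_comp_of_fderiv_eq_mulVec (hDG _) (hUp ξ)).fun_sub
    ((hG _).hasDerivAt_comp_of_fderiv_eq_mulVec (hDG _) (hUm ξ)) |>.const_dotProduct l
  have hlamd : DifferentiableAt ℝ (fun t => lam (Um t)) ξ :=
    (hlam _).comp ξ (hUm ξ).differentiableAt
  have hRHd : l ⬝ᵥ (DF (Up ξ) *ᵥ Up' ξ - DF (Um ξ) *ᵥ Um' ξ) =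
      lam (Um ξ) * l ⬝ᵥ (DG (Up ξ) *ᵥ Up' ξ - DG (Um ξ) *ᵥ Um' ξ) :=
    hFd.eq_mul_of_eq_mul_of_eq_zero hGd hlamd
      (fun t => by rw [hRH, dotProduct_smul, smul_eq_mul]) hGorth
  have hUm_eig : DF (Um ξ) *ᵥ Um' ξ = lam (Um ξ) • (DG (Um ξ) *ᵥ Um' ξ) := by
    rw [← smul_mulVec, ← sub_eq_zero, ← sub_mulVec, heig]
  have hμ : μ = lam (Um ξ) := by
    refine mul_right_cancel₀ hnz ?_
    rw [← smul_eq_mul, ← smul_dotProduct, ← hleft]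
    simp only [← dotProduct_mulVec, dotProduct_sub, hUm_eig, dotProduct_smul, smul_eq_mul]
      at hRHd ⊢
    linarith
  have hl : l ≠ 0 := by
    rintro rfl
    simp at hnz
  exact ⟨hμ, hμ ▸ det_sub_smul_eq_zero_of_vecMul_eq_smul hl hleft⟩

/-- Under the composite-wave hypotheses, if `l` is a left generalized eigenvector of
`(DF, DG)` at `U⁺(ξ)` with eigenvalue `μ`, `lᵀ(G(U⁺(ξ)) − G(U⁻(ξ))) = 0` and
`lᵀ DG(U⁺(ξ))(U⁺)′(ξ) ≠ 0`, then `μ = λ(U⁻(ξ))`; in particular the matrix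
`DF(U⁺(ξ)) − λ(U⁻(ξ)) DG(U⁺(ξ))` is singular. -/
theorem stmt13 {n : ℕ} (hn : 0 < n)
    (F G : (Fin n → ℝ) → (Fin n → ℝ))
    (DF DG : (Fin n → ℝ) → Matrix (Fin n) (Fin n) ℝ)
    (hF : Differentiable ℝ F) (hG : Differentiable ℝ G)
    (hDF : ∀ U v, fderiv ℝ F U v = DF U *ᵥ v)
    (hDG : ∀ U v, fderiv ℝ G U v = DG U *ᵥ v)
    (lam : (Fin n → ℝ) → ℝ) (gradlam : (Fin n → ℝ) → Fin n → ℝ)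
    (hlam : Differentiable ℝ lam)
    (hgrad : ∀ U v, fderiv ℝ lam U v = gradlam U ⬝ᵥ v)
    (Um Up : ℝ → Fin n → ℝ) (Um' Up' : ℝ → Fin n → ℝ)
    (hUm : ∀ ξ, HasDerivAt Um (Um' ξ) ξ)
    (hUp : ∀ ξ, HasDerivAt Up (Up' ξ) ξ)
    (hRH : ∀ ξ, F (Up ξ) - F (Um ξ) = lam (Um ξ) • (G (Up ξ) - G (Um ξ)))
    (heig : ∀ ξ, (DF (Um ξ) - lam (Um ξ) • DG (Um ξ)) *ᵥ Um' ξ = 0)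
    (ξ : ℝ) (μ : ℝ) (l : Fin n → ℝ)
    (hleft : l ᵥ* DF (Up ξ) = μ • (l ᵥ* DG (Up ξ)))
    (hGorth : l ⬝ᵥ (G (Up ξ) - G (Um ξ)) = 0)
    (hnz : (l ᵥ* DG (Up ξ)) ⬝ᵥ Up' ξ ≠ 0) :
    μ = lam (Um ξ) ∧ (DF (Up ξ) - lam (Um ξ) • DG (Up ξ)).det = 0 :=
  stmt13_general F G DF DG hF hG hDF hDG lam hlam Um Up Um' Up' hUm hUp hRH heig ξ μ l hleft hGorth
    hnz
end

section
/- Under the composite-wave hypotheses, let ξ be fixed. If ∇λ(U⁻(ξ)) · (U⁻)′(ξ) = 0 and (U⁺)′(ξ) ≠ 0, then det(DF(U⁺(ξ)) − λ(U⁻(ξ)) DG(U⁺(ξ))) = 0. -/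
/-!
Differentiate the Rankine–Hugoniot relation in `ξ`. Since `λ ∘ U⁻` is stationary at `ξ`, the
operator `DF - λ DG` takes the same value on `(U⁺)′` (at `U⁺`) as on `(U⁻)′` (at `U⁻`), and the
latter vanishes. So `(U⁺)′ ≠ 0` lies in the kernel of `DF(U⁺) - λ DG(U⁺)`.
-/

open Matrix Filter Topology

theorem fderiv_sub_smul_fderiv_apply_eq_of_rankineHugoniot {𝕜 E V : Type*}
    [NontriviallyNormedField 𝕜] [NormedAddCommGroup E] [NormedSpace 𝕜 E]
    [NormedAddCommGroup V] [NormedSpace 𝕜 V]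
    {F G : E → V} {Um Up : 𝕜 → E} {Um' Up' : E} {c : 𝕜 → 𝕜} {ξ : 𝕜}
    (hFm : DifferentiableAt 𝕜 F (Um ξ)) (hFp : DifferentiableAt 𝕜 F (Up ξ))
    (hGm : DifferentiableAt 𝕜 G (Um ξ)) (hGp : DifferentiableAt 𝕜 G (Up ξ))
    (hUm : HasDerivAt Um Um' ξ) (hUp : HasDerivAt Up Up' ξ) (hc : HasDerivAt c 0 ξ)
    (hRH : ∀ᶠ t in 𝓝 ξ, F (Up t) - F (Um t) = c t • (G (Up t) - G (Um t))) :
    fderiv 𝕜 F (Up ξ) Up' - c ξ • fderiv 𝕜 G (Up ξ) Up'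
      = fderiv 𝕜 F (Um ξ) Um' - c ξ • fderiv 𝕜 G (Um ξ) Um' := by
  have hLHS : HasDerivAt (fun t => F (Up t) - F (Um t))
      (fderiv 𝕜 F (Up ξ) Up' - fderiv 𝕜 F (Um ξ) Um') ξ :=
    (hFp.hasFDerivAt.comp_hasDerivAt ξ hUp).sub (hFm.hasFDerivAt.comp_hasDerivAt ξ hUm)
  have hRHS : HasDerivAt (fun t => c t • (G (Up t) - G (Um t)))
      (c ξ • (fderiv 𝕜 G (Up ξ) Up' - fderiv 𝕜 G (Um ξ) Um')) ξ := by
    have h := hc.smul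
      ((hGp.hasFDerivAt.comp_hasDerivAt ξ hUp).sub (hGm.hasFDerivAt.comp_hasDerivAt ξ hUm))
    rwa [zero_smul, add_zero] at h
  have hjump := hLHS.unique (hRHS.congr_of_eventuallyEq hRH)
  rw [smul_sub] at hjump
  rwa [sub_eq_sub_iff_sub_eq_sub]

theorem stmt14_general {n : ℕ}
    (F G : (Fin n → ℝ) → (Fin n → ℝ))
    (DF DG : (Fin n → ℝ) → Matrix (Fin n) (Fin n) ℝ)
    (hF : Differentiable ℝ F) (hG : Differentiable ℝ G)
    (hDF : ∀ U v, fderiv ℝ F U v = DF U *ᵥ v)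
    (hDG : ∀ U v, fderiv ℝ G U v = DG U *ᵥ v)
    (lam : (Fin n → ℝ) → ℝ) (gradlam : (Fin n → ℝ) → Fin n → ℝ)
    (hlam : Differentiable ℝ lam)
    (hgrad : ∀ U v, fderiv ℝ lam U v = gradlam U ⬝ᵥ v)
    (Um Up : ℝ → Fin n → ℝ) (Um' Up' : ℝ → Fin n → ℝ)
    (hUm : ∀ ξ, HasDerivAt Um (Um' ξ) ξ)
    (hUp : ∀ ξ, HasDerivAt Up (Up' ξ) ξ)
    (hRH : ∀ ξ, F (Up ξ) - F (Um ξ) = lam (Um ξ) • (G (Up ξ) - G (Um ξ)))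
    (heig : ∀ ξ, (DF (Um ξ) - lam (Um ξ) • DG (Um ξ)) *ᵥ Um' ξ = 0)
    (ξ : ℝ)
    (hzero : gradlam (Um ξ) ⬝ᵥ Um' ξ = 0) (hUp' : Up' ξ ≠ 0) :
    (DF (Up ξ) - lam (Um ξ) • DG (Up ξ)).det = 0 := by
  have hstat : HasDerivAt (fun t => lam (Um t)) 0 ξ := by
    simpa [hgrad, hzero, Function.comp_def] using (hlam _).hasFDerivAt.comp_hasDerivAt ξ (hUm ξ)
  have hbalance := fderiv_sub_smul_fderiv_apply_eq_of_rankineHugoniot (hF _) (hF _) (hG _)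
    (hG _) (hUm ξ) (hUp ξ) hstat (Eventually.of_forall hRH)
  have hker : (DF (Up ξ) - lam (Um ξ) • DG (Up ξ)) *ᵥ Up' ξ = 0 := by
    rw [sub_mulVec, smul_mulVec, ← hDF, ← hDG, hbalance, hDF, hDG, ← smul_mulVec,
      ← sub_mulVec, heig]
  exact exists_mulVec_eq_zero_iff.mp ⟨Up' ξ, hUp', hker⟩

/-- Under the composite-wave hypotheses, if `∇λ(U⁻(ξ))·(U⁻)′(ξ) = 0` and
`(U⁺)′(ξ) ≠ 0`, then `det(DF(U⁺(ξ)) − λ(U⁻(ξ)) DG(U⁺(ξ))) = 0`. -/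
theorem stmt14 {n : ℕ} (hn : 0 < n)
    (F G : (Fin n → ℝ) → (Fin n → ℝ))
    (DF DG : (Fin n → ℝ) → Matrix (Fin n) (Fin n) ℝ)
    (hF : Differentiable ℝ F) (hG : Differentiable ℝ G)
    (hDF : ∀ U v, fderiv ℝ F U v = DF U *ᵥ v)
    (hDG : ∀ U v, fderiv ℝ G U v = DG U *ᵥ v)
    (lam : (Fin n → ℝ) → ℝ) (gradlam : (Fin n → ℝ) → Fin n → ℝ)
    (hlam : Differentiable ℝ lam)
    (hgrad : ∀ U v, fderiv ℝ lam U v = gradlam U ⬝ᵥ v)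
    (Um Up : ℝ → Fin n → ℝ) (Um' Up' : ℝ → Fin n → ℝ)
    (hUm : ∀ ξ, HasDerivAt Um (Um' ξ) ξ)
    (hUp : ∀ ξ, HasDerivAt Up (Up' ξ) ξ)
    (hRH : ∀ ξ, F (Up ξ) - F (Um ξ) = lam (Um ξ) • (G (Up ξ) - G (Um ξ)))
    (heig : ∀ ξ, (DF (Um ξ) - lam (Um ξ) • DG (Um ξ)) *ᵥ Um' ξ = 0)
    (ξ : ℝ)
    (hzero : gradlam (Um ξ) ⬝ᵥ Um' ξ = 0) (hUp' : Up' ξ ≠ 0) :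
    (DF (Up ξ) - lam (Um ξ) • DG (Up ξ)).det = 0 :=
  stmt14_general F G DF DG hF hG hDF hDG lam gradlam hlam hgrad Um Up Um' Up' hUm hUp hRH heig ξ
    hzero hUp'
end

section
/- Let F, G : ℝⁿ → ℝⁿ be twice differentiable, let λ : ℝⁿ → ℝ be differentiable with gradient ∇λ, and let r : ℝⁿ → ℝⁿ be differentiable, such that the generalized eigenvector identity (DF(U) − λ(U) DG(U)) r(U) = 0 holds for all U in a neighborhood of a point U₀. Let l ∈ ℝⁿ be a row vector with lᵀ (DF(U₀) − λ(U₀) DG(U₀)) = 0 and lᵀ (DG(U₀) r(U₀)) ≠ 0, and write r₀ = r(U₀). Then the directional derivative of λ along r at U₀ satisfies ∇λ(U₀) · r₀ = ( lᵀ (D²F(U₀)(r₀, r₀)) − λ(U₀) lᵀ (D²G(U₀)(r₀, r₀)) ) / ( lᵀ (DG(U₀) r₀) ), where D²F(U₀)(r₀, r₀) and D²G(U₀)(r₀, r₀) denote the second derivatives (Hessian bilinear maps) of F and G at U₀ evaluated twice on r₀. -/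
/-!
Differentiate the eigenvector identity `(DF U - λ U • DG U) *ᵥ r U = 0` at `U₀` in the direction
`r₀`. By the Leibniz rule the result is `(DF U₀ - λ U₀ • DG U₀) *ᵥ r'` plus the derivative with `r`
frozen at `r₀`, namely `D²F(r₀, r₀) - (∇λ ⬝ᵥ r₀) • DG U₀ *ᵥ r₀ - λ U₀ • D²G(r₀, r₀)`. Pairing with
the left eigenvector `l` kills the unknown `r'`, and solving for `∇λ ⬝ᵥ r₀` gives the formula.
-/

open Matrix

theorem Matrix.mulVec_eq_sum_smul_mulVec_single {R m ι : Type*} [CommSemiring R] [Fintype ι]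
    [DecidableEq ι] (M : Matrix m ι R) (v : ι → R) :
    M *ᵥ v = ∑ j, v j • M *ᵥ Pi.single j 1 := by
  ext i
  simp [mulVec, dotProduct, Finset.sum_apply, mul_comm]

section MulVec

variable {𝕜 E m ι : Type*} [NontriviallyNormedField 𝕜] [NormedAddCommGroup E] [NormedSpace 𝕜 E]
  [Fintype m] [Fintype ι] [DecidableEq ι] {D : E → Matrix m ι 𝕜} {r : E → ι → 𝕜} {x : E}

theorem fderiv_matrix_mulVec_apply_eq_sum
    (hD : ∀ j, DifferentiableAt 𝕜 (fun y => D y *ᵥ Pi.single j 1) x)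
    (hr : DifferentiableAt 𝕜 r x) (w : E) :
    fderiv 𝕜 (fun y => D y *ᵥ r y) x w =
      D x *ᵥ fderiv 𝕜 r x w + ∑ j, r x j • fderiv 𝕜 (fun y => D y *ᵥ Pi.single j 1) x w := by
  rw [funext fun y => mulVec_eq_sum_smul_mulVec_single (D y) (r y),
    fderiv_fun_sum fun j _ => (differentiableAt_pi.1 hr j).fun_smul (hD j)]
  simp only [FunLike.coe_sum, Finset.sum_apply]
  rw [mulVec_eq_sum_smul_mulVec_single (D x), ← Finset.sum_add_distrib]
  refine Finset.sum_congr rfl fun j _ => ?_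
  rw [fderiv_fun_smul (differentiableAt_pi.1 hr j) (hD j), fderiv_apply hr]
  simp only [_root_.add_apply, _root_.smul_apply,
    ContinuousLinearMap.smulRight_apply, ContinuousLinearMap.comp_apply,
    ContinuousLinearMap.proj_apply]
  abel

theorem fderiv_matrix_mulVec_apply
    (hD : ∀ v, DifferentiableAt 𝕜 (fun y => D y *ᵥ v) x)
    (hr : DifferentiableAt 𝕜 r x) (w : E) :
    fderiv 𝕜 (fun y => D y *ᵥ r y) x w =
      D x *ᵥ fderiv 𝕜 r x w + fderiv 𝕜 (fun y => D y *ᵥ r x) x w := by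
  rw [fderiv_matrix_mulVec_apply_eq_sum (fun _ => hD _) hr,
    fderiv_matrix_mulVec_apply_eq_sum (r := fun _ => r x) (fun _ => hD _)
      (differentiableAt_const _)]
  simp

end MulVec

theorem stmt18_general {n : ℕ}
    (DF DG : (Fin n → ℝ) → Matrix (Fin n) (Fin n) ℝ)
    (HF HG : (Fin n → ℝ) → (Fin n → ℝ) → (Fin n → ℝ))
    (lam : (Fin n → ℝ) → ℝ) (gradlam : (Fin n → ℝ) → Fin n → ℝ)
    (r : (Fin n → ℝ) → (Fin n → ℝ))
    (U0 : Fin n → ℝ) (l : Fin n → ℝ)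
    (hF2 : ∀ v, DifferentiableAt ℝ (fun x => DF x *ᵥ v) U0)
    (hG2 : ∀ v, DifferentiableAt ℝ (fun x => DG x *ᵥ v) U0)
    (hHF : ∀ v w, fderiv ℝ (fun x => DF x *ᵥ v) U0 w = HF v w)
    (hHG : ∀ v w, fderiv ℝ (fun x => DG x *ᵥ v) U0 w = HG v w)
    (hlam : Differentiable ℝ lam)
    (hgrad : ∀ U w, fderiv ℝ lam U w = gradlam U ⬝ᵥ w)
    (hr : DifferentiableAt ℝ r U0)
    (heig : ∀ᶠ U in nhds U0, (DF U - lam U • DG U) *ᵥ r U = 0)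
    (hl : l ᵥ* (DF U0 - lam U0 • DG U0) = 0)
    (hlG : l ⬝ᵥ (DG U0 *ᵥ r U0) ≠ 0) :
    gradlam U0 ⬝ᵥ r U0 =
      (l ⬝ᵥ HF (r U0) (r U0) - lam U0 * (l ⬝ᵥ HG (r U0) (r U0))) /
        (l ⬝ᵥ (DG U0 *ᵥ r U0)) := by
  set A := fun U => DF U - lam U • DG U
  have hA_mulVec (v : Fin n → ℝ) :
      (fun U => A U *ᵥ v) = fun U => DF U *ᵥ v - lam U • DG U *ᵥ v := by
    funext U
    rw [sub_mulVec, smul_mulVec]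
  have hA (v : Fin n → ℝ) : DifferentiableAt ℝ (fun U => A U *ᵥ v) U0 := by
    rw [hA_mulVec]
    exact (hF2 v).sub ((hlam U0).fun_smul (hG2 v))
  have hA_fderiv (v w : Fin n → ℝ) : fderiv ℝ (fun U => A U *ᵥ v) U0 w =
      HF v w - ((gradlam U0 ⬝ᵥ w) • DG U0 *ᵥ v + lam U0 • HG v w) := by
    rw [hA_mulVec, fderiv_fun_sub (hF2 v) ((hlam U0).fun_smul (hG2 v)),
      fderiv_fun_smul (hlam U0) (hG2 v)]
    simp [hHF, hHG, hgrad, add_comm]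
  have hderiv_zero : fderiv ℝ (fun U => A U *ᵥ r U) U0 (r U0) = 0 := by
    have heig' : (fun U => A U *ᵥ r U) =ᶠ[nhds U0] fun _ => 0 := heig
    rw [heig'.fderiv_eq, fderiv_const_apply, _root_.zero_apply]
  have hl_A : l ᵥ* A U0 = 0 := hl
  rw [fderiv_matrix_mulVec_apply hA hr, hA_fderiv] at hderiv_zero
  have key := congrArg (l ⬝ᵥ ·) hderiv_zero
  simp only [dotProduct_add, dotProduct_sub, dotProduct_smul, smul_eq_mul,
    dotProduct_mulVec l (A U0), hl_A, zero_dotProduct, zero_add, dotProduct_zero] at key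
  rw [eq_div_iff hlG]
  linear_combination -key

/-- Formula for the directional derivative of a characteristic speed `λ` along its
eigenvector field `r` in terms of the Hessians of the flux `F` and accumulation `G`:
`∇λ(U₀)·r₀ = (lᵀ D²F(U₀)(r₀,r₀) − λ(U₀) lᵀ D²G(U₀)(r₀,r₀)) / (lᵀ DG(U₀) r₀)`. -/
theorem stmt18 {n : ℕ} (hn : 0 < n)
    (F G : (Fin n → ℝ) → (Fin n → ℝ))
    (DF DG : (Fin n → ℝ) → Matrix (Fin n) (Fin n) ℝ)
    (HF HG : (Fin n → ℝ) → (Fin n → ℝ) → (Fin n → ℝ))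
    (lam : (Fin n → ℝ) → ℝ) (gradlam : (Fin n → ℝ) → Fin n → ℝ)
    (r : (Fin n → ℝ) → (Fin n → ℝ))
    (U0 : Fin n → ℝ) (l : Fin n → ℝ)
    (hF : Differentiable ℝ F) (hG : Differentiable ℝ G)
    (hDF : ∀ U w, fderiv ℝ F U w = DF U *ᵥ w)
    (hDG : ∀ U w, fderiv ℝ G U w = DG U *ᵥ w)
    (hF2 : ∀ v, DifferentiableAt ℝ (fun x => DF x *ᵥ v) U0)
    (hG2 : ∀ v, DifferentiableAt ℝ (fun x => DG x *ᵥ v) U0)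
    (hHF : ∀ v w, fderiv ℝ (fun x => DF x *ᵥ v) U0 w = HF v w)
    (hHG : ∀ v w, fderiv ℝ (fun x => DG x *ᵥ v) U0 w = HG v w)
    (hlam : Differentiable ℝ lam)
    (hgrad : ∀ U w, fderiv ℝ lam U w = gradlam U ⬝ᵥ w)
    (hr : DifferentiableAt ℝ r U0)
    (heig : ∀ᶠ U in nhds U0, (DF U - lam U • DG U) *ᵥ r U = 0)
    (hl : l ᵥ* (DF U0 - lam U0 • DG U0) = 0)
    (hlG : l ⬝ᵥ (DG U0 *ᵥ r U0) ≠ 0) :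
    gradlam U0 ⬝ᵥ r U0 =
      (l ⬝ᵥ HF (r U0) (r U0) - lam U0 * (l ⬝ᵥ HG (r U0) (r U0))) /
        (l ⬝ᵥ (DG U0 *ᵥ r U0)) :=
  stmt18_general DF DG HF HG lam gradlam r U0 l hF2 hG2 hHF hHG hlam hgrad hr heig hl hlG
end
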